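/- arXiv:2204.06284 — 5 statements merged into one kernel-verified Lean document; each statement's English description precedes it below -/
import Mathlib

section
/- Let ℓ ≥ 2 be an integer, let G be a graph in 𝒢_ℓ, and let e be an edge of G that is not contained in any cycle of length 2ℓ+1. Then the graph G − e obtained by deleting the edge e also belongs to 𝒢_ℓ. -/
/-!
Deleting `e = uv` keeps the girth, since a shortest cycle of `G` avoids `e`. An odd hole of
`G - e` missing `u` or `v` is still a hole of `G`. Otherwise `uv` is a chord of it and cuts it into
two chordless `u`–`v` paths whose lengths add up to an odd number; closing the even one with `uv`
gives an odd hole of `G` through `e`. That hole is longer than `2ℓ + 1`, because `e` lies on no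
cycle of that length, so `G ∈ 𝒢_ℓ` excludes it.
-/

open SimpleGraph

/-- A *hole* of length `n` in `G`: an induced cycle of length `n ≥ 4`. -/
def SimpleGraph.HasHole {V : Type*} (G : SimpleGraph V) (n : ℕ) : Prop :=
  4 ≤ n ∧ ∃ (v : V) (w : G.Walk v v), w.IsCycle ∧ w.toSubgraph.IsInduced ∧ w.length = n

/-- `G ∈ 𝒢_ℓ`: `G` has girth `2ℓ+1` and no odd hole of length at least `2ℓ+3`. -/
def SimpleGraph.MemGFamily {V : Type*} (G : SimpleGraph V) (l : ℕ) : Prop :=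
  G.egirth = (2 * l + 1 : ℕ) ∧ ∀ n : ℕ, Odd n → 2 * l + 3 ≤ n → ¬ G.HasHole n

namespace SimpleGraph

variable {V : Type*} {G : SimpleGraph V}

namespace Walk

lemma IsCycle.eq_or_eq_of_mem_support_append {u v x : V} {p : G.Walk u v} {q : G.Walk v u}
    (hc : (p.append q).IsCycle) (hxp : x ∈ p.support) (hxq : x ∈ q.support) :
    x = u ∨ x = v := by
  have hnd := hc.support_nodup
  rw [tail_support_append, List.nodup_append] at hnd
  rw [mem_support_iff] at hxp hxq
  by_contra! hx
  exact hnd.2.2 x (hxp.resolve_left hx.1) x (hxq.resolve_left hx.2) rfl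

lemma IsChordless.of_append_left {u v : V} {p : G.Walk u v} {q : G.Walk v u}
    (hc : (p.append q).IsCycle) (hch : (p.append q).IsChordless) (huv : ¬ G.Adj u v) :
    p.IsChordless := by
  rw [isChordless_iff_forall_mem_edges] at hch ⊢
  intro x y hx hy hxy
  have hmem := hch (by simp [mem_support_append_iff, hx]) (by simp [mem_support_append_iff, hy])
    hxy
  rw [edges_append, List.mem_append] at hmem
  refine hmem.resolve_right fun hq => ?_
  -- an edge of `q` between vertices of `p` can only join `u` and `v`
  have hx' := hc.eq_or_eq_of_mem_support_append hx (q.fst_mem_support_of_mem_edges hq)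
  have hy' := hc.eq_or_eq_of_mem_support_append hy (q.snd_mem_support_of_mem_edges hq)
  rcases hx' with rfl | rfl <;> rcases hy' with rfl | rfl
  all_goals first | exact hxy.ne rfl | exact huv hxy | exact huv hxy.symm

lemma IsChordless.rotate [DecidableEq V] {u v : V} {c : G.Walk v v} (hch : c.IsChordless)
    (hu : u ∈ c.support) : (c.rotate u hu).IsChordless := by
  rw [isChordless_iff_forall_mem_edges] at hch ⊢
  intro x y hx hy hxy
  rw [mem_support_rotate_iff] at hx hy
  exact (c.rotate_edges u hu).perm.mem_iff.2 (hch hx hy hxy)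

lemma IsChordless.reverse {u v : V} {p : G.Walk u v} (hch : p.IsChordless) :
    p.reverse.IsChordless := by
  rw [isChordless_iff_forall_mem_edges] at hch ⊢
  intro x y hx hy hxy
  rw [support_reverse, List.mem_reverse] at hx hy
  simpa [edges_reverse] using hch hx hy hxy

lemma IsChordless.mapLe_deleteEdges {u v a b : V} {w : (G.deleteEdges {s(u, v)}).Walk a b}
    (hch : w.IsChordless) (huv : u ∉ w.support ∨ v ∉ w.support) :
    (w.mapLe (G.deleteEdges_le _)).IsChordless := by
  rw [isChordless_iff_forall_mem_edges] at hch ⊢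
  intro x y hx hy hxy
  rw [support_mapLe_eq_support] at hx hy
  rw [edges_mapLe_eq_edges]
  refine hch hx hy (deleteEdges_adj.2 ⟨hxy, fun hxyuv => ?_⟩)
  rcases Sym2.eq_iff.1 (Set.mem_singleton_iff.1 hxyuv) with ⟨rfl, rfl⟩ | ⟨rfl, rfl⟩ <;> tauto

lemma exists_isCycle_isChordless_of_deleteEdges {u v : V} (h : G.Adj u v)
    {p : (G.deleteEdges {s(u, v)}).Walk u v} (hp : p.IsPath) (hch : p.IsChordless) :
    ∃ w : G.Walk v v, w.IsCycle ∧ w.IsChordless ∧ w.length = p.length + 1 ∧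
      s(u, v) ∈ w.edges := by
  have hvu : s(v, u) ∉ p.edges := fun he =>
    (edgeSet_deleteEdges _ ▸ p.edges_subset_edgeSet he).2 Sym2.eq_swap
  refine ⟨cons h.symm (p.mapLe (G.deleteEdges_le _)), ?_, ?_, by simp, by simp⟩
  · rw [cons_isCycle_iff, isPath_mapLe, edges_mapLe_eq_edges]
    exact ⟨hp, hvu⟩
  · rw [isChordless_iff_forall_mem_edges] at hch ⊢
    intro x y hx hy hxy
    rw [support_cons, support_mapLe_eq_support, List.mem_cons] at hx hy
    replace hx := hx.elim (· ▸ p.end_mem_support) id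
    replace hy := hy.elim (· ▸ p.end_mem_support) id
    rw [edges_cons, edges_mapLe_eq_edges, List.mem_cons]
    by_cases hxyuv : s(x, y) = s(u, v)
    · exact .inl (hxyuv.trans Sym2.eq_swap)
    · exact .inr (hch hx hy (deleteEdges_adj.2 ⟨hxy, hxyuv⟩))

lemma IsCycle.exists_odd_chordless_of_deleteEdges [DecidableEq V] {u v a : V} (h : G.Adj u v)
    {c : (G.deleteEdges {s(u, v)}).Walk a a} (hc : c.IsCycle) (hch : c.IsChordless)
    (hodd : Odd c.length) (hu : u ∈ c.support) (hv : v ∈ c.support) :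
    ∃ (x : V) (w : G.Walk x x), w.IsCycle ∧ w.IsChordless ∧ Odd w.length ∧
      s(u, v) ∈ w.edges := by
  set c' := c.rotate u hu
  have hc' : c'.IsCycle := hc.rotate hu
  have hch' : c'.IsChordless := hch.rotate hu
  have hv' : v ∈ c'.support := (c.mem_support_rotate_iff u hu).2 hv
  have hnadj : ¬ (G.deleteEdges {s(u, v)}).Adj u v := by simp
  set p := c'.takeUntil v hv'
  set q := c'.dropUntil v hv'
  have hpq : p.append q = c' := c'.take_spec hv'
  have hqp : q.append p = c'.rotate v hv' := rfl
  have hp : p.IsPath := hc'.isPath_takeUntil hv'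
  have hq : q.IsPath := (hpq ▸ hc').isPath_of_append_right (not_nil_of_ne h.ne)
  have hpch : p.IsChordless := .of_append_left (hpq ▸ hc') (hpq ▸ hch') hnadj
  have hqch : q.IsChordless :=
    .of_append_left (hqp ▸ hc'.rotate hv') (hqp ▸ hch'.rotate hv') fun h' => hnadj h'.symm
  have hlen : p.length + q.length = c.length := by rw [← length_append, hpq, length_rotate]
  rcases Nat.even_or_odd p.length with hpe | hpo
  · obtain ⟨w, hw, hwch, hwlen, hwe⟩ := exists_isCycle_isChordless_of_deleteEdges h hp hpch
    exact ⟨v, w, hw, hwch, hwlen ▸ hpe.add_one, hwe⟩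
  · obtain ⟨w, hw, hwch, hwlen, hwe⟩ :=
      exists_isCycle_isChordless_of_deleteEdges h hq.reverse hqch.reverse
    have hqe : Even q.length := (Nat.odd_add.1 (hlen ▸ hodd)).1 hpo
    exact ⟨v, w, hw, hwch, by rw [hwlen, length_reverse]; exact hqe.add_one, hwe⟩

lemma IsCycle.hasHole {a : V} {w : G.Walk a a} (hw : w.IsCycle) (hch : w.IsChordless)
    (h4 : 4 ≤ w.length) : G.HasHole w.length :=
  ⟨h4, a, w, hw, isInduced_toSubgraph.2 hch, rfl⟩

end Walk

lemma egirth_deleteEdges_singleton {e : Sym2 V}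
    (he : ∀ (a : V) (w : G.Walk a a), w.IsCycle → G.egirth = w.length → e ∉ w.edges) :
    (G.deleteEdges {e}).egirth = G.egirth := by
  refine le_antisymm ?_ (egirth_anti (G.deleteEdges_le _))
  by_cases hG : G.IsAcyclic
  · exact hG.egirth_eq_top ▸ le_top
  obtain ⟨a, w, hw, hlen⟩ := exists_egirth_eq_length.2 hG
  calc (G.deleteEdges {e}).egirth ≤ (w.toDeleteEdge e (he a w hw hlen)).length :=
        egirth_le_length (Walk.IsCycle.toDeleteEdges G {e} hw _)
    _ = G.egirth := by simp [hlen]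

namespace MemGFamily

variable {l : ℕ}

lemma le_length (hG : G.MemGFamily l) {a : V} {w : G.Walk a a} (hw : w.IsCycle) :
    2 * l + 1 ≤ w.length := by
  exact_mod_cast hG.1 ▸ egirth_le_length hw

lemma one_le (hG : G.MemGFamily l) : 1 ≤ l := by
  have := hG.1 ▸ G.three_le_egirth
  norm_cast at this
  omega

lemma length_eq_of_odd_isChordless (hG : G.MemGFamily l) {a : V} {w : G.Walk a a}
    (hw : w.IsCycle) (hch : w.IsChordless) (hodd : Odd w.length) : w.length = 2 * l + 1 := by
  have hle := hG.le_length hw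
  have hl := hG.one_le
  by_contra hne
  have hlong : 2 * l + 3 ≤ w.length := by
    obtain ⟨k, hk⟩ := hodd
    omega
  exact hG.2 _ hodd hlong (hw.hasHole hch (by omega))

end MemGFamily

end SimpleGraph

theorem stmt_0_general {V : Type*} (l : ℕ) (G : SimpleGraph V)
    (hG : G.MemGFamily l) (e : Sym2 V) (he : e ∈ G.edgeSet)
    (hnc : ¬ ∃ (v : V) (w : G.Walk v v), w.IsCycle ∧ w.length = 2 * l + 1 ∧ e ∈ w.edges) :
    (G.deleteEdges {e}).MemGFamily l := by
  classical
  induction e using Sym2.ind with | _ u v => ?_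
  refine ⟨?_, fun n hn hln ⟨_, a, c, hc, hind, hlen⟩ => ?_⟩
  · rw [egirth_deleteEdges_singleton, hG.1]
    intro a w hw hlen hew
    exact hnc ⟨a, w, hw, by rw [hG.1] at hlen; exact_mod_cast hlen.symm, hew⟩
  rw [Walk.isInduced_toSubgraph] at hind
  subst hlen
  by_cases huv : u ∈ c.support ∧ v ∈ c.support
  · obtain ⟨x, w, hw, hwch, hwodd, hwe⟩ :=
      hc.exists_odd_chordless_of_deleteEdges he hind hn huv.1 huv.2
    exact hnc ⟨x, w, hw, hG.length_eq_of_odd_isChordless hw hwch hwodd, hwe⟩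
  · have hchG := hind.mapLe_deleteEdges (not_and_or.1 huv)
    have := hG.length_eq_of_odd_isChordless (hc.mapLe _) hchG (by simpa using hn)
    rw [Walk.length_mapLe] at this
    omega

/-- if `G ∈ 𝒢_ℓ` (`ℓ ≥ 2`) and the edge `e` of `G` lies on no cycle of length
`2ℓ+1`, then `G - e ∈ 𝒢_ℓ`. -/
theorem stmt_0 {V : Type*} [Fintype V] (l : ℕ) (hl : 2 ≤ l) (G : SimpleGraph V)
    (hG : G.MemGFamily l) (e : Sym2 V) (he : e ∈ G.edgeSet)
    (hnc : ¬ ∃ (v : V) (w : G.Walk v v), w.IsCycle ∧ w.length = 2 * l + 1 ∧ e ∈ w.edges) :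
    (G.deleteEdges {e}).MemGFamily l :=
  stmt_0_general l G hG e he hnc
end

section
/- Let G be a graph in 𝒢₀. Then every edge of G is contained in some cycle of length 5. -/
open SimpleGraph

/-- `G ∈ 𝒢₀`: `G ∈ 𝒢₂`, `χ(G) = 4`, and every proper subgraph of `G` is 3-colorable. -/
def SimpleGraph.MemG0 {V : Type*} (G : SimpleGraph V) : Prop :=
  G.MemGFamily 2 ∧ G.chromaticNumber = 4 ∧
    ∀ H : G.Subgraph, H ≠ ⊤ → H.coe.Colorable 3

/-!
Delete an edge `xy` of `G`; the rest is 3-colorable, and in any such coloring `x` and `y` get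
the same color `a`. By Kempe's argument `x` and `y` lie in one Kempe chain for `a` and a second
color `b`. A shortest path from `x` to `y` inside that chain alternates `a` and `b`, so it has even
length, and it has no chord in `G` apart from `xy`, since every vertex on it is colored `a` or `b`.
Closing it with `xy` gives an induced odd cycle through `xy`: girth 5 makes its length at least
5 and the absence of odd holes of length at least 7 makes it exactly 5.
-/

namespace SimpleGraph

variable {V α : Type*} {G : SimpleGraph V} {x y u v : V}

/-- The connected components of `G.kempeGraph c i j` are the Kempe chains of `c` for the
colors `i` and `j`. -/
def kempeGraph (G : SimpleGraph V) (c : V → α) (i j : α) : SimpleGraph V where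
  Adj a b := G.Adj a b ∧ (c a = i ∨ c a = j) ∧ (c b = i ∨ c b = j)
  symm := ⟨fun _ _ h => ⟨h.1.symm, h.2.2, h.2.1⟩⟩
  loopless := ⟨fun a h => G.loopless.irrefl a h.1⟩

section Kempe

variable {c : V → α} {i j : α}

@[simp]
lemma kempeGraph_adj :
    (G.kempeGraph c i j).Adj u v ↔ G.Adj u v ∧ (c u = i ∨ c u = j) ∧ (c v = i ∨ c v = j) :=
  Iff.rfl

lemma kempeGraph_le : G.kempeGraph c i j ≤ G := fun _ _ h => h.1

lemma Reachable.kempeGraph_color (h : (G.kempeGraph c i j).Reachable u v)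
    (hu : c u = i ∨ c u = j) : c v = i ∨ c v = j := by
  obtain ⟨w⟩ := h.symm
  cases w with
  | nil => exact hu
  | cons hadj _ => exact (kempeGraph_adj.mp hadj).2.1

lemma Walk.kempeGraph_color_eq_iff_even (hc : ∀ a b, G.Adj a b → c a ≠ c b)
    (w : (G.kempeGraph c i j).Walk u v) (hv : c v = i ∨ c v = j) :
    c u = c v ↔ Even w.length := by
  induction w with
  | nil => simp
  | cons hadj w ih =>
    rw [length_cons, Nat.even_add_one, ← ih hv]
    obtain ⟨hG, ha, hm⟩ := kempeGraph_adj.mp hadj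
    have := hc _ _ hG
    rcases ha with ha | ha <;> rcases hm with hm | hm <;> rcases hv with hb | hb <;> grind

lemma Coloring.exists_kempeSwap (c : G.Coloring α) (hx : c x = i) :
    ∃ c' : G.Coloring α, c' x = j ∧ ∀ v, ¬(G.kempeGraph c i j).Reachable x v → c' v = c v := by
  classical
  set K := G.kempeGraph c i j
  let f : V → α := fun v => if K.Reachable x v then Equiv.swap i j (c v) else c v
  have hmixed : ∀ a b, G.Adj a b → K.Reachable x a → ¬K.Reachable x b → f a ≠ f b := by
    intro a b hab ha hb
    have hca := ha.kempeGraph_color (Or.inl hx)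
    have hcb : ¬(c b = i ∨ c b = j) := fun hcb =>
      hb (ha.trans (kempeGraph_adj.mpr ⟨hab, hca, hcb⟩).reachable)
    simp only [f, if_pos ha, if_neg hb]
    rcases hca with hca | hca <;> grind [Equiv.swap_apply_left, Equiv.swap_apply_right]
  refine ⟨Coloring.mk f fun {a b} hab => ?_, ?_, fun v hv => if_neg hv⟩
  · by_cases ha : K.Reachable x a <;> by_cases hb : K.Reachable x b
    · simpa [f, ha, hb] using c.valid hab
    · exact hmixed a b hab ha hb
    · exact (hmixed b a hab.symm hb ha).symm
    · simpa [f, ha, hb] using c.valid hab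
  · change f x = j
    simp only [f, if_pos (Reachable.refl x), hx, Equiv.swap_apply_left]

end Kempe

def Coloring.ofDeleteEdge (c : (G.deleteEdges {s(x, y)}).Coloring α) (h : c x ≠ c y) :
    G.Coloring α :=
  Coloring.mk c fun {a b} hab => by
    by_cases he : s(a, b) = s(x, y)
    · rcases Sym2.eq_iff.mp he with ⟨rfl, rfl⟩ | ⟨rfl, rfl⟩
      exacts [h, h.symm]
    · exact c.valid (deleteEdges_adj.mpr ⟨hab, he⟩)

/-- Otherwise swapping the two colors on the Kempe chain of `x` would separate `x` from `y`. -/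
lemma reachable_kempeGraph_of_deleteEdges [IsEmpty (G.Coloring α)]
    (c : (G.deleteEdges {s(x, y)}).Coloring α) {j : α} (hj : j ≠ c x) :
    c x = c y ∧ ((G.deleteEdges {s(x, y)}).kempeGraph c (c x) j).Reachable x y := by
  have hxy : c x = c y := by
    by_contra h
    exact isEmptyElim (c.ofDeleteEdge h)
  refine ⟨hxy, by_contra fun hr => ?_⟩
  obtain ⟨c', hc'x, hc'⟩ := c.exists_kempeSwap (j := j) rfl
  refine isEmptyElim (c'.ofDeleteEdge ?_)
  rw [hc'x, hc' y hr, ← hxy]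
  exact hj

lemma Walk.mem_edges_of_length_eq_dist_of_adj_start (P : G.Walk x y)
    (hP : P.length = G.dist x y) (hxv : G.Adj x v) (hv : v ∈ P.support) : s(x, v) ∈ P.edges := by
  classical
  cases P with
  | nil => exact absurd (List.mem_singleton.mp hv ▸ hxv) (G.loopless.irrefl _)
  | @cons _ m _ h P =>
    rcases List.mem_cons.mp hv with rfl | hv
    · exact absurd hxv (G.loopless.irrefl _)
    have hshort := hP ▸ G.dist_le (cons hxv (P.dropUntil v hv))
    have hsplit := congrArg length (P.take_spec hv)
    simp only [length_cons, length_append] at hshort hsplit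
    obtain rfl : m = v := eq_of_length_eq_zero (by omega : (P.takeUntil v hv).length = 0)
    exact List.mem_cons_self

lemma Walk.mem_edges_of_length_eq_dist (P : G.Walk x y)
    (hP : P.length = G.dist x y) (huv : G.Adj u v) (hu : u ∈ P.support) (hv : v ∈ P.support) :
    s(u, v) ∈ P.edges := by
  classical
  induction P generalizing u v with
  | nil =>
    simp only [support_nil, List.mem_singleton] at hu hv
    subst hu hv
    exact absurd huv (G.loopless.irrefl _)
  | @cons a m b h P ih =>
    rw [support_cons, List.mem_cons] at hu hv
    rcases hu with rfl | hu
    · exact (cons h P).mem_edges_of_length_eq_dist_of_adj_start hP huv (by simp [hv])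
    rcases hv with rfl | hv
    · rw [Sym2.eq_swap]
      exact (cons h P).mem_edges_of_length_eq_dist_of_adj_start hP huv.symm (by simp [hu])
    obtain ⟨Q, hQ⟩ := P.reachable.exists_walk_length_eq_dist
    have hPQ := hP ▸ G.dist_le (cons h Q)
    rw [length_cons, length_cons] at hPQ
    exact List.mem_cons_of_mem _ (ih (le_antisymm (by omega) (G.dist_le P)) huv hu hv)

lemma Walk.isInduced_cons_mapLe {K : SimpleGraph V} (hK : K ≤ G) (hyx : G.Adj y x)
    (P : K.Walk x y) (hP : P.length = K.dist x y)
    (hchord : ∀ u ∈ P.support, ∀ v ∈ P.support, G.Adj u v → s(u, v) ≠ s(x, y) → K.Adj u v) :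
    (cons hyx (P.mapLe hK)).toSubgraph.IsInduced := by
  have hsupp : ∀ w ∈ (cons hyx (P.mapLe hK)).toSubgraph.verts, w ∈ P.support := by
    intro w hw
    rw [mem_verts_toSubgraph, support_cons, support_mapLe_eq_support, List.mem_cons] at hw
    exact hw.elim (· ▸ P.end_mem_support) id
  intro u hu v hv huv
  rw [← Subgraph.mem_edgeSet, mem_edges_toSubgraph, edges_cons, edges_mapLe_eq_edges,
    List.mem_cons]
  by_cases he : s(u, v) = s(x, y)
  · exact Or.inl (he.trans Sym2.eq_swap)
  · exact Or.inr (P.mem_edges_of_length_eq_dist hP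
      (hchord u (hsupp u hu) v (hsupp v hv) huv he) (hsupp u hu) (hsupp v hv))

lemma exists_isInduced_odd_cycle_of_deleteEdges [Nontrivial α] [IsEmpty (G.Coloring α)]
    (hxy : G.Adj x y) (c : (G.deleteEdges {s(x, y)}).Coloring α) :
    ∃ C : G.Walk y y, C.IsCycle ∧ C.toSubgraph.IsInduced ∧ Odd C.length ∧ s(x, y) ∈ C.edges := by
  classical
  obtain ⟨j, hj⟩ := exists_ne (c x)
  obtain ⟨hcxy, hreach⟩ := reachable_kempeGraph_of_deleteEdges c hj
  set K := (G.deleteEdges {s(x, y)}).kempeGraph c (c x) j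
  have hKG : K ≤ G := kempeGraph_le.trans (deleteEdges_le _)
  have hnot : ¬K.Adj y x := fun h => by simpa using (kempeGraph_adj.mp h).1
  obtain ⟨P, hP⟩ := hreach.exists_walk_length_eq_dist
  refine ⟨Walk.cons hxy.symm (P.mapLe hKG), ?_, ?_, ?_, ?_⟩
  · rw [Walk.cons_isCycle_iff, Walk.edges_mapLe_eq_edges]
    exact ⟨(P.isPath_of_length_eq_dist hP).mapLe hKG, fun h => hnot (P.adj_of_mem_edges h)⟩
  · refine P.isInduced_cons_mapLe hKG hxy.symm hP fun u hu v hv huv he => ?_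
    have hcol : ∀ w ∈ P.support, c w = c x ∨ c w = j := fun w hw =>
      Reachable.kempeGraph_color ⟨P.takeUntil w hw⟩ (Or.inl rfl)
    exact kempeGraph_adj.mpr ⟨deleteEdges_adj.mpr ⟨huv, he⟩, hcol u hu, hcol v hv⟩
  · have := (P.kempeGraph_color_eq_iff_even (fun _ _ h => c.valid h) (Or.inl hcxy.symm)).mp hcxy
    simpa [Nat.odd_add_one] using this
  · simp [Walk.edges_cons, Sym2.eq_swap]

lemma MemGFamily.length_eq_of_isInduced {l : ℕ} (hG : G.MemGFamily l) {C : G.Walk v v}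
    (hC : C.IsCycle) (hCind : C.toSubgraph.IsInduced) (hodd : Odd C.length) :
    C.length = 2 * l + 1 := by
  have hgirth : 2 * l + 1 ≤ C.length := by exact_mod_cast hG.1 ▸ egirth_le_length hC
  have hl : 1 ≤ l := by
    have := hG.1 ▸ G.three_le_egirth
    norm_cast at this
    omega
  by_contra hne
  obtain ⟨m, hm⟩ := hodd
  exact hG.2 _ ⟨m, hm⟩ (by omega) ⟨by omega, v, C, hC, hCind, rfl⟩

lemma colorable_deleteEdges_of_forall_ne_top {n : ℕ}
    (h : ∀ H : G.Subgraph, H ≠ ⊤ → H.coe.Colorable n) (hxy : G.Adj x y) :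
    (G.deleteEdges {s(x, y)}).Colorable n := by
  set H := (⊤ : G.Subgraph).deleteEdges {s(x, y)}
  have hne : H ≠ ⊤ := fun hH => by
    have : H.Adj x y := hH ▸ Subgraph.top_adj.mpr hxy
    simp [H] at this
  have hspan : H.spanningCoe = G.deleteEdges {s(x, y)} := by
    rw [← Subgraph.deleteEdges_spanningCoe_eq, Subgraph.spanningCoe_top]
  exact hspan ▸ (h H hne).of_hom (H.spanningCoeEquivCoeOfSpanning fun _ => trivial).toHom

end SimpleGraph

theorem stmt_3_general {V : Type*} (G : SimpleGraph V) (hG : G.MemG0) :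
    ∀ e ∈ G.edgeSet, ∃ (v : V) (w : G.Walk v v), w.IsCycle ∧ w.length = 5 ∧ e ∈ w.edges := by
  obtain ⟨hfam, hchrom, hcrit⟩ := hG
  have : IsEmpty (G.Coloring (Fin 3)) := not_nonempty_iff.mp fun h3 => by
    have := (show G.Colorable 3 from h3).chromaticNumber_le
    rw [hchrom] at this
    norm_num at this
  rintro ⟨x, y⟩ hxy
  obtain ⟨c⟩ := colorable_deleteEdges_of_forall_ne_top hcrit hxy
  obtain ⟨C, hC, hCind, hodd, hmem⟩ := exists_isInduced_odd_cycle_of_deleteEdges hxy c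
  exact ⟨y, C, hC, hfam.length_eq_of_isInduced hC hCind hodd, hmem⟩

/-- in a graph `G ∈ 𝒢₀`, every edge lies on some cycle of length 5. -/
theorem stmt_3 {V : Type*} [Fintype V] (G : SimpleGraph V) (hG : G.MemG0) :
    ∀ e ∈ G.edgeSet, ∃ (v : V) (w : G.Walk v v), w.IsCycle ∧ w.length = 5 ∧ e ∈ w.edges :=
  stmt_3_general G hG
end

section
/- Let G be a graph in 𝒢₀. Then the minimum degree of G is at least 4. -/
open SimpleGraph

/-!
Let `v` have degree at most `3` and `3`-colour `G - v`, which is possible by criticality. Every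
colour must occur on the neighbours of `v`, since otherwise the colouring extends to `G`; so `v`
has exactly three neighbours `x 0, x 1, x 2`, and `x m` has colour `m`. By a Kempe-chain swap, `x i`
and `x j` lie in the same `{i, j}`-Kempe chain. A shortest Kempe path from `x i` to `x j` is
induced in `G` and has odd length, which is neither `1` (girth `5`) nor at least `5` (together with
`v` it would be an odd hole of length at least `7`). So it is a path `x i, a, b, x j`. The three
paths between `x 0, x 1, x 2` form a `9`-cycle in which every possible chord joins two vertices of
the same colour or closes a cycle of length `3` or `4`, possibly through `v`; so `G` has a hole of
odd length `9`.
-/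

namespace SimpleGraph

variable {V : Type*} {G : SimpleGraph V}

open Walk in
theorem cycleGraph.mk_mem_edges_cycle_of_sub_eq_one {n : ℕ} {s t : Fin (n + 3)} (h : t - s = 1) :
    s(s, t) ∈ (cycleGraph.cycle n).edges := by
  have hs := s.isLt
  have ht : t.val = s.val + 1 ∨ s.val = n + 2 ∧ t.val = 0 := by
    have h' := congrArg Fin.val h
    rw [Fin.val_sub, Fin.val_one', Nat.mod_eq_of_lt (by omega : 1 < n + 3)] at h'
    rcases lt_or_ge t.val s.val with hlt | hge
    · rw [Nat.mod_eq_of_lt (by omega)] at h'; omega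
    · rw [Nat.mod_eq_sub_mod (by omega), Nat.mod_eq_of_lt (by omega)] at h'; omega
  rw [mk_mem_edges_iff_exists]
  refine ⟨n + 2 - s.val, by simp; omega, ?_⟩
  rw [cycleGraph.getVert_cycle (by omega), cycleGraph.getVert_cycle (by omega), Sym2.eq_swap]
  congr 1 <;> ext <;> simp only
  · rw [Nat.mod_eq_of_lt (by omega)]; omega
  · rcases ht with ht | ⟨hs', ht⟩
    · rw [Nat.mod_eq_of_lt (by omega)]; omega
    · rw [show n + 3 - (n + 2 - s.val) = n + 3 by omega, Nat.mod_self, ht]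

theorem cycleGraph.mk_mem_edges_cycle {n : ℕ} {s t : Fin (n + 3)}
    (h : (cycleGraph (n + 3)).Adj s t) : s(s, t) ∈ (cycleGraph.cycle n).edges := by
  rcases cycleGraph_adj.mp h with h | h
  · rw [Sym2.eq_swap]; exact mk_mem_edges_cycle_of_sub_eq_one h
  · exact mk_mem_edges_cycle_of_sub_eq_one h

open Walk in
theorem hasHole_of_embedding {n : ℕ} (hn : 4 ≤ n) (f : cycleGraph n ↪g G) : G.HasHole n := by
  obtain ⟨m, rfl⟩ : ∃ m, n = m + 3 := ⟨n - 3, by omega⟩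
  refine ⟨hn, f 0, (cycleGraph.cycle m).map f.toHom,
    (isCycle_map_iff_of_injective f.injective).mpr cycleGraph.isCycle_cycle, ?_, by simp⟩
  rw [isInduced_toSubgraph, isChordless_iff_forall_mem_edges]
  intro u w hu hw hst
  rw [Walk.support_map, List.mem_map] at hu hw
  obtain ⟨⟨s, -, rfl⟩, ⟨t, -, rfl⟩⟩ := And.intro hu hw
  rw [Walk.edges_map, List.mem_map]
  exact ⟨s(s, t), cycleGraph.mk_mem_edges_cycle (f.map_adj_iff.mp hst), rfl⟩

namespace Walk

variable {u v : V}

theorem isChordless_of_length_eq_dist {p : G.Walk u v} (hp : p.length = G.dist u v) :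
    p.IsChordless := by
  refine isChordless_iff_forall_mem_edges.mpr fun a b ha hb hab => ?_
  obtain ⟨i, rfl, hi⟩ := mem_support_iff_exists_getVert.mp ha
  obtain ⟨j, rfl, hj⟩ := mem_support_iff_exists_getVert.mp hb
  clear ha hb
  wlog hij : i < j generalizing i j
  · rcases (not_lt.mp hij).lt_or_eq with hji | rfl
    · rw [Sym2.eq_swap]; exact this j hj i hi hab.symm hji
    · exact absurd hab (G.irrefl)
  have hshort := dist_le ((p.take i).append (cons hab (p.drop j)))
  simp only [length_append, take_length, length_cons, drop_length, ← hp] at hshort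
  rw [mk_mem_edges_iff_exists]
  exact ⟨i, by omega, by rw [show j = i + 1 by omega]⟩

theorem IsChordless.mapLe {G' : SimpleGraph V} (h : G' ≤ G) {p : G'.Walk u v}
    (hp : p.IsChordless) (hind : ∀ a ∈ p.support, ∀ b ∈ p.support, G.Adj a b → G'.Adj a b) :
    (p.mapLe h).IsChordless := by
  rw [isChordless_iff_forall_mem_edges, support_mapLe_eq_support, edges_mapLe_eq_edges]
  exact fun a b ha hb hab => hp.mem_edges ha hb (hind a ha b hb hab)

end Walk

open Walk in
theorem hasHole_of_isPath_of_isChordless {a b v : V} {p : G.Walk a b} (hp : p.IsPath)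
    (hc : p.IsChordless) (hlen : 2 ≤ p.length) (hva : G.Adj v a) (hbv : G.Adj b v)
    (hv : v ∉ p.support) (hN : ∀ u ∈ p.support, G.Adj v u → u = a ∨ u = b) :
    G.HasHole (p.length + 2) := by
  have hab : a ≠ b := by
    rintro rfl; have := length_eq_zero_iff.mpr (isPath_iff_nil.mp hp); omega
  have hvp : ∀ w, s(v, w) ∉ p.edges := fun w h => hv (p.fst_mem_support_of_mem_edges h)
  set W := cons hva (p.concat hbv)
  have hWsupp : ∀ u ∈ W.support, u = v ∨ u ∈ p.support := by simp [W]; tauto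
  have hve : ∀ w ∈ p.support, G.Adj v w → s(v, w) ∈ W.edges := by
    intro w hw hvw
    rcases hN w hw hvw with rfl | rfl <;> simp [W, Sym2.eq_swap]
  refine ⟨by omega, v, W, ?_, ?_, by simp [W]⟩
  · refine (cons_isCycle_iff _ _).mpr ⟨hp.concat hv hbv, ?_⟩
    simp only [edges_concat, List.concat_eq_append, List.mem_append, List.mem_singleton, not_or,
      Sym2.eq_iff]
    exact ⟨hvp a, fun h => hbv.ne h.1.symm, fun h => hab h.2⟩
  · rw [isInduced_toSubgraph, isChordless_iff_forall_mem_edges]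
    intro u w hu hw huw
    rcases hWsupp u hu with rfl | hu' <;> rcases hWsupp w hw with rfl | hw'
    · exact absurd huw (G.irrefl)
    · exact hve w hw' huw
    · rw [Sym2.eq_swap]; exact hve u hu' huw.symm
    · simpa [W] using .inr (.inl (hc.mem_edges hu' hw' huw))

section Girth

variable {a b c d : V}

open Walk in
theorem not_adj_of_adj_of_adj (hG : 4 ≤ G.egirth) (hab : G.Adj a b) (hbc : G.Adj b c) :
    ¬G.Adj a c := by
  intro hac
  have hW : (cons hab (cons hbc (cons hac.symm nil))).IsCycle := by
    rw [cons_isCycle_iff]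
    simp [hab.ne, hbc.ne, hac.ne, hac.ne', hab.ne']
  have := hG.trans (egirth_le_length hW)
  norm_num at this

open Walk in
theorem not_adj_of_adj_of_adj_of_adj (hG : 5 ≤ G.egirth) (hab : G.Adj a b) (hbc : G.Adj b c)
    (hcd : G.Adj c d) (hac : a ≠ c) (hbd : b ≠ d) : ¬G.Adj a d := by
  intro had
  have hW : (cons hab (cons hbc (cons hcd (cons had.symm nil)))).IsCycle := by
    rw [cons_isCycle_iff]
    simp [hab.ne, hbc.ne, hcd.ne, had.ne, hab.ne', had.ne', hac, hbd, hac.symm]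
  have := hG.trans (egirth_le_length hW)
  norm_num at this

end Girth

namespace Coloring

variable {α : Type*} {H : SimpleGraph V} (C : H.Coloring α)

def kempeGraph (i j : α) : SimpleGraph V where
  Adj u w := H.Adj u w ∧ (C u = i ∨ C u = j) ∧ (C w = i ∨ C w = j)
  symm := ⟨fun _ _ h => ⟨h.1.symm, h.2.2, h.2.1⟩⟩
  loopless := ⟨fun _ h => H.irrefl h.1⟩

theorem kempeGraph_le (i j : α) : C.kempeGraph i j ≤ H := fun _ _ h => h.1

theorem even_length_iff_of_kempeGraph {i j : α} (hij : i ≠ j) {x y : V}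
    (p : (C.kempeGraph i j).Walk x y) : Even p.length ↔ (C x = i ↔ C y = i) := by
  classical
  let B : (C.kempeGraph i j).Coloring Bool := Coloring.mk (fun u => decide (C u = i)) <| by
    rintro u w ⟨huw, hu, hw⟩
    have := C.valid huw
    simp only [ne_eq, decide_eq_decide]
    rcases hu with hu | hu <;> rcases hw with hw | hw <;> simp_all [eq_comm]
  simpa [B, Coloring.mk] using B.even_length_iff_congr p

variable [DecidableEq α]

theorem swap_apply_ne_of_reachable_of_not_reachable {i j : α} {x u w : V} (huw : H.Adj u w)
    (hu : (C.kempeGraph i j).Reachable x u) (hw : ¬(C.kempeGraph i j).Reachable x w) :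
    Equiv.swap i j (C u) ≠ C w := by
  intro h
  have hCu : C u = i ∨ C u = j := by
    by_contra! hC
    exact C.valid huw (by rwa [Equiv.swap_apply_of_ne_of_ne hC.1 hC.2] at h)
  have hCw : C w = i ∨ C w = j := by
    rw [← h]; rcases hCu with hC | hC <;> simp [hC]
  exact hw (hu.trans (Adj.reachable ⟨huw, hCu, hCw⟩))

open scoped Classical in
noncomputable def kempeSwap (i j : α) (x : V) : H.Coloring α :=
  Coloring.mk
    (fun u => if (C.kempeGraph i j).Reachable x u then Equiv.swap i j (C u) else C u) <| by
    intro u w huw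
    by_cases hu : (C.kempeGraph i j).Reachable x u <;>
      by_cases hw : (C.kempeGraph i j).Reachable x w <;> simp only [hu, hw, if_true, if_false]
    · exact (Equiv.swap i j).injective.ne (C.valid huw)
    · exact C.swap_apply_ne_of_reachable_of_not_reachable huw hu hw
    · exact (C.swap_apply_ne_of_reachable_of_not_reachable huw.symm hw hu).symm
    · exact C.valid huw

theorem kempeSwap_apply_of_reachable {i j : α} {x u : V}
    (h : (C.kempeGraph i j).Reachable x u) : C.kempeSwap i j x u = Equiv.swap i j (C u) :=
  if_pos h

theorem kempeSwap_apply_of_not_reachable {i j : α} {x u : V}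
    (h : ¬(C.kempeGraph i j).Reachable x u) : C.kempeSwap i j x u = C u :=
  if_neg h

end Coloring

section DeleteVertex

variable {v : V}

theorem colorable_deleteIncidenceSet_of_colorable_deleteVerts {n : ℕ} [NeZero n]
    (h : ((⊤ : G.Subgraph).deleteVerts {v}).coe.Colorable n) :
    (G.deleteIncidenceSet v).Colorable n := by
  classical
  obtain ⟨C⟩ := h
  refine ⟨Coloring.mk (fun u => if hu : u = v then 0 else C ⟨u, by simpa using hu⟩) ?_⟩
  intro u w huw
  obtain ⟨huw, hu, hw⟩ := deleteIncidenceSet_adj.mp huw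
  have hH : ((⊤ : G.Subgraph).deleteVerts {v}).Adj u w := by simpa [hu, hw] using huw
  simpa [hu, hw] using C.valid (v := ⟨u, by simpa using hu⟩) (w := ⟨w, by simpa using hw⟩) hH

theorem colorable_of_forall_adj_ne {n : ℕ} (C : (G.deleteIncidenceSet v).Coloring (Fin n))
    (k : Fin n) (hk : ∀ u, G.Adj v u → C u ≠ k) : G.Colorable n := by
  classical
  refine ⟨Coloring.mk (fun u => if u = v then k else C u) ?_⟩
  intro u w huw
  by_cases hu : u = v <;> by_cases hw : w = v <;> simp only [hu, hw, if_true, if_false]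
  · exact absurd huw (by rw [hu, hw]; exact G.irrefl)
  · exact (hk w (hu ▸ huw)).symm
  · exact hk u (hw ▸ huw.symm)
  · exact C.valid (deleteIncidenceSet_adj.mpr ⟨huw, hu, hw⟩)

theorem exists_forall_adj_eq_of_ncard_neighborSet_le [Finite V] {α : Type*} (f : V → α)
    (hf : ∀ k, ∃ u, G.Adj v u ∧ f u = k) (hdeg : (G.neighborSet v).ncard ≤ Nat.card α) :
    ∃ x : α → V, (∀ k, G.Adj v (x k) ∧ f (x k) = k) ∧ ∀ u, G.Adj v u → u = x (f u) := by
  choose x hx using hf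
  have hinj : Function.Injective x := fun k l h => by rw [← (hx k).2, ← (hx l).2, h]
  have hrange : Set.range x = G.neighborSet v := by
    refine Set.eq_of_subset_of_ncard_le (Set.range_subset_iff.mpr fun k => (hx k).1) ?_
    rwa [Set.ncard_range_of_injective hinj]
  refine ⟨x, hx, fun u hu => ?_⟩
  obtain ⟨k, rfl⟩ : u ∈ Set.range x := hrange ▸ hu
  rw [(hx k).2]

variable {α : Type*}

theorem reachable_kempeGraph [DecidableEq α]
    (hall : ∀ C : (G.deleteIncidenceSet v).Coloring α, ∀ k, ∃ u, G.Adj v u ∧ C u = k)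
    (C : (G.deleteIncidenceSet v).Coloring α) {x : α → V}
    (hN : ∀ u, G.Adj v u → u = x (C u)) (i j : α) : (C.kempeGraph i j).Reachable (x i) (x j) := by
  by_contra hij
  -- otherwise the swap on the Kempe chain of `x i` leaves colour `i` unused around `v`
  obtain ⟨u, hvu, hu⟩ := hall (C.kempeSwap i j (x i)) i
  by_cases hr : (C.kempeGraph i j).Reachable (x i) u
  · rw [C.kempeSwap_apply_of_reachable hr, Equiv.swap_apply_eq_iff, Equiv.swap_apply_left] at hu
    exact hij (((hN u hvu).trans (congrArg x hu)) ▸ hr)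
  · rw [C.kempeSwap_apply_of_not_reachable hr] at hu
    exact hr (((hN u hvu).trans (congrArg x hu)) ▸ Reachable.refl _)

theorem length_kempe_path_eq_three (hG : 5 ≤ G.egirth)
    (hodd : ∀ n, Odd n → 7 ≤ n → ¬G.HasHole n) (C : (G.deleteIncidenceSet v).Coloring α)
    {x : α → V} (hx : ∀ k, G.Adj v (x k)) (hCx : ∀ k, C (x k) = k)
    (hN : ∀ u, G.Adj v u → u = x (C u)) {i j : α} (hij : i ≠ j)
    {p : (C.kempeGraph i j).Walk (x i) (x j)}
    (hlen : p.length = (C.kempeGraph i j).dist (x i) (x j)) : p.length = 3 := by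
  have hxij : x i ≠ x j := fun h => hij (by rw [← hCx i, h, hCx j])
  have hsupp : ∀ u ∈ p.support, u ≠ v ∧ (C u = i ∨ C u = j) := fun u hu => by
    obtain ⟨w, huw⟩ := mem_support_of_mem_walk_support p (Walk.not_nil_of_ne hxij) hu
    exact ⟨(deleteIncidenceSet_adj.mp huw.1).2.1, huw.2.1⟩
  have hodd_len : Odd p.length := by
    rw [← Nat.not_even_iff_odd, C.even_length_iff_of_kempeGraph hij, hCx, hCx]
    simpa using hij.symm
  have hne1 : p.length ≠ 1 := fun h => not_adj_of_adj_of_adj (le_trans (by norm_num) hG)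
    (hx i).symm (hx j) (deleteIncidenceSet_adj.mp (Walk.adj_of_length_eq_one h).1).1
  -- `p` is chordless in `G` and meets the neighbourhood of `v` only in its ends
  have hlt5 : p.length < 5 := by
    by_contra! h5
    have hle := (C.kempeGraph_le i j).trans (G.deleteIncidenceSet_le v)
    have hind : ∀ a ∈ p.support, ∀ b ∈ p.support, G.Adj a b → (C.kempeGraph i j).Adj a b :=
      fun a ha b hb hab => ⟨deleteIncidenceSet_adj.mpr ⟨hab, (hsupp a ha).1, (hsupp b hb).1⟩,
        (hsupp a ha).2, (hsupp b hb).2⟩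
    have hvN : ∀ u ∈ (p.mapLe hle).support, G.Adj v u → u = x i ∨ u = x j := by
      rw [Walk.support_mapLe_eq_support]
      intro u hu hvu
      rw [hN u hvu]
      rcases (hsupp u hu).2 with h | h <;> simp [h]
    have hole := hasHole_of_isPath_of_isChordless ((p.isPath_of_length_eq_dist hlen).mapLe hle)
      ((Walk.isChordless_of_length_eq_dist hlen).mapLe hle hind) (by simp; omega) (hx i)
      (hx j).symm (by simpa using fun h => (hsupp v h).1 rfl) hvN
    rw [Walk.length_mapLe] at hole
    exact hodd _ (hodd_len.add_even even_two) (by omega) hole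
  obtain ⟨k, hk⟩ := hodd_len
  omega

theorem exists_kempe_path_three (hG : 5 ≤ G.egirth)
    (hodd : ∀ n, Odd n → 7 ≤ n → ¬G.HasHole n) (C : (G.deleteIncidenceSet v).Coloring α)
    {x : α → V} (hx : ∀ k, G.Adj v (x k)) (hCx : ∀ k, C (x k) = k)
    (hN : ∀ u, G.Adj v u → u = x (C u)) {i j : α} (hij : i ≠ j)
    (hr : (C.kempeGraph i j).Reachable (x i) (x j)) :
    ∃ a b, G.Adj (x i) a ∧ G.Adj a b ∧ G.Adj b (x j) ∧ C a = j ∧ C b = i ∧ a ≠ v ∧ b ≠ v ∧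
      a ≠ x j ∧ x i ≠ b := by
  obtain ⟨p, hp, hlen⟩ := hr.exists_path_of_dist
  have h3 := length_kempe_path_eq_three hG hodd C hx hCx hN hij hlen
  have hK : ∀ n < 3, (C.kempeGraph i j).Adj (p.getVert n) (p.getVert (n + 1)) :=
    fun n hn => p.adj_getVert_succ (h3 ▸ hn)
  have hxa := hK 0 (by norm_num)
  have hab := hK 1 (by norm_num)
  have hbx := hK 2 (by norm_num)
  rw [Walk.getVert_zero] at hxa
  rw [show 2 + 1 = p.length by omega, Walk.getVert_length] at hbx
  have hCa : C (p.getVert 1) = j :=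
    hxa.2.2.resolve_left fun h => C.valid hxa.1 (by rw [hCx, h])
  have hCb : C (p.getVert 2) = i :=
    hab.2.2.resolve_right fun h => C.valid hab.1 (by rw [hCa, h])
  have hne : ∀ m n, m ≤ 3 → n ≤ 3 → m ≠ n → p.getVert m ≠ p.getVert n :=
    fun m n hm hn hmn => hp.getVert_injOn.ne (by simp [h3, hm]) (by simp [h3, hn]) hmn
  obtain ⟨hxa, -, hav⟩ := deleteIncidenceSet_adj.mp hxa.1
  obtain ⟨hab, -, hbv⟩ := deleteIncidenceSet_adj.mp hab.1
  refine ⟨_, _, hxa, hab, (deleteIncidenceSet_adj.mp hbx.1).1, hCa, hCb, hav, hbv, ?_, ?_⟩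
  · simpa [← h3] using hne 1 3 (by omega) (by omega) (by omega)
  · simpa using hne 0 2 (by omega) (by omega) (by omega)

end DeleteVertex

section NineCycle

variable {x a b : Fin 3 → V}

-- Up to rotation, these are all the chords of the cycle `x 0, a 0, b 0, x 1, a 1, …, b 2`.
theorem not_adj_of_kempe_paths {v : V} (hG : 5 ≤ G.egirth)
    (C : (G.deleteIncidenceSet v).Coloring (Fin 3)) (hx : ∀ m, G.Adj v (x m))
    (hCx : ∀ m, C (x m) = m) (hxa : ∀ m, G.Adj (x m) (a m)) (hab : ∀ m, G.Adj (a m) (b m))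
    (hbx : ∀ m, G.Adj (b m) (x (m + 1))) (hCa : ∀ m, C (a m) = m + 1) (hCb : ∀ m, C (b m) = m)
    (hav : ∀ m, a m ≠ v) (hbv : ∀ m, b m ≠ v) (hax : ∀ m, a m ≠ x (m + 1))
    (hxb : ∀ m, x m ≠ b m) (m : Fin 3) :
    ¬G.Adj (x m) (b m) ∧ ¬G.Adj (x m) (x (m + 1)) ∧ ¬G.Adj (x m) (a (m + 1)) ∧
      ¬G.Adj (a m) (x (m + 1)) ∧ ¬G.Adj (a m) (a (m + 1)) ∧ ¬G.Adj (a m) (b (m + 1)) ∧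
      ¬G.Adj (b m) (a (m + 1)) ∧ ¬G.Adj (b m) (b (m + 1)) ∧ ¬G.Adj (b m) (x (m + 1 + 1)) := by
  have hG4 : 4 ≤ G.egirth := le_trans (by norm_num) hG
  have hxv : ∀ m, x m ≠ v := fun m => (hx m).ne'
  have hC : ∀ {u w}, u ≠ v → w ≠ v → C u = C w → ¬G.Adj u w :=
    fun hu hw hc h => C.valid (deleteIncidenceSet_adj.mpr ⟨h, hu, hw⟩) hc
  have hne : ∀ {u w}, C u ≠ C w → u ≠ w := fun h e => h (e ▸ rfl)
  have hm1 : ∀ m : Fin 3, m ≠ m + 1 := by decide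
  have hm2 : ∀ m : Fin 3, m ≠ m + 1 + 1 := by decide
  refine ⟨hC (hxv m) (hbv m) (by rw [hCx, hCb]), not_adj_of_adj_of_adj hG4 (hx m).symm (hx _),
    not_adj_of_adj_of_adj_of_adj hG (hx m).symm (hx _) (hxa _)
      (hne (by rw [hCx, hCx]; exact hm1 m)) (hav _).symm,
    hC (hav m) (hxv _) (by rw [hCa, hCx]),
    not_adj_of_adj_of_adj_of_adj hG (hab m) (hbx m) (hxa _) (hax m)
      (hne (by rw [hCb, hCa]; exact hm2 m)),
    hC (hav m) (hbv _) (by rw [hCa, hCb]),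
    not_adj_of_adj_of_adj hG4 (hbx m) (hxa _),
    not_adj_of_adj_of_adj_of_adj hG (hbx m) (hxa _) (hab _)
      (hne (by rw [hCb, hCa]; exact hm2 m)) (hxb _),
    not_adj_of_adj_of_adj_of_adj hG (hbx m) (hx _).symm (hx _) (hbv m)
      (hne (by rw [hCx, hCx]; exact hm1 _))⟩

theorem hasHole_nine (hxa : ∀ m, G.Adj (x m) (a m)) (hab : ∀ m, G.Adj (a m) (b m))
    (hbx : ∀ m, G.Adj (b m) (x (m + 1)))
    (hchord : ∀ m, ¬G.Adj (x m) (b m) ∧ ¬G.Adj (x m) (x (m + 1)) ∧ ¬G.Adj (x m) (a (m + 1)) ∧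
      ¬G.Adj (a m) (x (m + 1)) ∧ ¬G.Adj (a m) (a (m + 1)) ∧ ¬G.Adj (a m) (b (m + 1)) ∧
      ¬G.Adj (b m) (a (m + 1)) ∧ ¬G.Adj (b m) (b (m + 1)) ∧ ¬G.Adj (b m) (x (m + 1 + 1))) :
    G.HasHole 9 := by
  let y : Fin 9 → V := ![x 0, a 0, b 0, x 1, a 1, b 1, x 2, a 2, b 2]
  have hy : ∀ s t, G.Adj (y s) (y t) ↔ (cycleGraph 9).Adj s t := by
    have := hxa 0; have := hxa 1; have := hxa 2
    have := hab 0; have := hab 1; have := hab 2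
    have := hbx 0; have := hbx 1; have := hbx 2
    obtain ⟨_, _, _, _, _, _, _, _, _⟩ := hchord 0
    obtain ⟨_, _, _, _, _, _, _, _, _⟩ := hchord 1
    obtain ⟨_, _, _, _, _, _, _, _, _⟩ := hchord 2
    simp only [Fin.reduceAdd] at *
    intro s t
    fin_cases s <;> fin_cases t
    all_goals first
      | exact iff_of_true (by simp only [y]; first | assumption | exact Adj.symm (by assumption))
          (by decide)
      | exact iff_of_false (by
          simp only [y]; first | exact G.irrefl | assumption | (rw [adj_comm]; assumption))
          (by decide)
  have hinj : Function.Injective y := by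
    have htwin : ∀ s t : Fin 9, (∀ k, (cycleGraph 9).Adj s k ↔ (cycleGraph 9).Adj t k) → s = t := by
      decide
    exact fun s t hst => htwin s t fun k => by rw [← hy, ← hy, hst]
  exact hasHole_of_embedding (by norm_num) ⟨⟨y, hinj⟩, hy _ _⟩

end NineCycle

end SimpleGraph

/-- every graph `G ∈ 𝒢₀` has minimum degree at least 4. -/
theorem stmt_4 {V : Type*} [Fintype V] (G : SimpleGraph V) (hG : G.MemG0) :
    ∀ v : V, 4 ≤ (G.neighborSet v).ncard := by
  obtain ⟨⟨hgirth, hodd⟩, hchrom, hcrit⟩ := hG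
  have hG5 : 5 ≤ G.egirth := by rw [hgirth]; rfl
  intro v
  by_contra! hdeg
  have hall : ∀ C : (G.deleteIncidenceSet v).Coloring (Fin 3), ∀ k, ∃ u, G.Adj v u ∧ C u = k := by
    intro C k
    by_contra! hk
    have := (colorable_of_forall_adj_ne C k hk).chromaticNumber_le
    rw [hchrom] at this
    norm_num at this
  have hne : (⊤ : G.Subgraph).deleteVerts {v} ≠ ⊤ := fun h => by
    simpa using congrArg (v ∈ ·.verts) h
  obtain ⟨C⟩ := colorable_deleteIncidenceSet_of_colorable_deleteVerts (hcrit _ hne)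
  obtain ⟨x, hx, hN⟩ := exists_forall_adj_eq_of_ncard_neighborSet_le C (hall C)
    (by rw [Nat.card_fin]; omega)
  choose a b hxa hab hbx hCa hCb hav hbv hax hxb using fun m : Fin 3 =>
    exists_kempe_path_three hG5 hodd C (fun k => (hx k).1) (fun k => (hx k).2) hN
      (i := m) (j := m + 1) (by simp) (reachable_kempeGraph hall C hN _ _)
  exact hodd 9 (by decide) (by norm_num) <| hasHole_nine hxa hab hbx <|
    not_adj_of_kempe_paths hG5 C (fun k => (hx k).1) (fun k => (hx k).2) hxa hab hbx hCa hCb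
      hav hbv hax hxb
end

section
/- Every graph G in 𝒢₀ is 3-connected, i.e., G has more than 3 vertices and G − X is connected for every vertex set X with |X| ≤ 2. -/
open SimpleGraph

/-- `X` is a cutset of `G`: deleting the vertices of `X` disconnects `G`. -/
def SimpleGraph.IsCutset {V : Type*} (G : SimpleGraph V) (X : Set V) : Prop :=
  ¬ (G.induce (Xᶜ : Set V)).Connected

/-- `G` is 3-connected: more than 3 vertices, and deleting any at most 2 vertices
leaves a connected graph. -/
def SimpleGraph.ThreeConnected {V : Type*} [Fintype V] (G : SimpleGraph V) : Prop :=
  3 < Fintype.card V ∧ ∀ X : Set V, X.ncard ≤ 2 → (G.induce (Xᶜ : Set V)).Connected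

/-!
Let `X` with `|X| ≤ 2` separate `G` into sides `A` and `B`. By criticality `G[A ∪ X]` and
`G[B ∪ X]` are 3-colourable, and colourings that can be matched on `X` by a permutation of the
colours glue to a 3-colouring of `G`. This is automatic when `|X| ≤ 1`. For `X = {u, v}` it
fails only if, say, every colouring `f` of the `A`-side gives `u` and `v` the same colour while
every colouring of the `B`-side gives them different ones. Kempe-chain recolouring then yields a
chordless `u`–`v` path of odd length through `B` and, for each colour `c ≠ f u`, a chordless
`u`–`v` path of even length through `A` alternating between `c` and `f u`. Together the two
paths form a hole; as there is no odd hole of length at least 7, the even path has length 2,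
so its middle vertex is a common neighbour of `u` and `v` coloured `c`. The two choices of `c`
give two common neighbours, i.e. a 4-cycle, contradicting girth 5.
-/

theorem Equiv.Perm.exists_apply_eq_and_apply_eq {β : Type*} [DecidableEq β] {a b c d : β}
    (h : a = b ↔ c = d) : ∃ σ : Equiv.Perm β, σ a = c ∧ σ b = d := by
  by_cases hab : a = b
  · subst hab
    exact ⟨Equiv.swap a c, Equiv.swap_apply_left _ _, by rw [Equiv.swap_apply_left, h.mp rfl]⟩
  · have hcd : c ≠ d := mt h.mpr hab
    have hbc : Equiv.swap a c b ≠ c := fun hb =>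
      hab ((Equiv.swap a c).injective (hb.trans (Equiv.swap_apply_left a c).symm)).symm
    refine ⟨(Equiv.swap a c).trans (Equiv.swap (Equiv.swap a c b) d), ?_, ?_⟩
    · simp only [Equiv.trans_apply, Equiv.swap_apply_left]
      exact Equiv.swap_apply_of_ne_of_ne hbc.symm hcd
    · simp only [Equiv.trans_apply, Equiv.swap_apply_left]

namespace SimpleGraph

variable {V α : Type*} {G : SimpleGraph V} {u v : V}

/-- `f` restricted to `S` is a proper colouring of `G[S]`; keeping `f` total on `V` lets colourings
of overlapping vertex sets be compared and glued. -/
def IsColoringOn (G : SimpleGraph V) (f : V → α) (S : Set V) : Prop :=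
  ∀ ⦃a⦄, a ∈ S → ∀ ⦃b⦄, b ∈ S → G.Adj a b → f a ≠ f b

namespace IsColoringOn

variable {f g : V → α} {S T : Set V}

theorem mono (hf : G.IsColoringOn f S) (hTS : T ⊆ S) : G.IsColoringOn f T :=
  fun _ ha _ hb hab => hf (hTS ha) (hTS hb) hab

theorem congr (hf : G.IsColoringOn f S) (hfg : S.EqOn f g) : G.IsColoringOn g S :=
  fun _ ha _ hb hab => hfg ha ▸ hfg hb ▸ hf ha hb hab

theorem comp {β : Type*} {σ : α → β} (hf : G.IsColoringOn f S) (hσ : Function.Injective σ) :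
    G.IsColoringOn (σ ∘ f) S :=
  fun _ ha _ hb hab => hσ.ne (hf ha hb hab)

theorem insert_of_forall_adj_ne {w : V} (hf : G.IsColoringOn f S)
    (hw : ∀ s ∈ S, G.Adj w s → f s ≠ f w) :
    G.IsColoringOn f (insert w S) := by
  rintro a (rfl | ha) b (rfl | hb) hab
  · exact absurd hab G.irrefl
  · exact (hw b hb hab).symm
  · exact hw a ha hab.symm
  · exact hf ha hb hab

theorem update_insert [DecidableEq V] {w : V} {c : α} (hf : G.IsColoringOn f S) (hwS : w ∉ S)
    (hw : ∀ s ∈ S, G.Adj w s → f s ≠ c) :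
    G.IsColoringOn (Function.update f w c) (insert w S) := by
  have hS : S.EqOn f (Function.update f w c) := fun s hs =>
    (Function.update_of_ne (ne_of_mem_of_not_mem hs hwS) _ _).symm
  refine (hf.congr hS).insert_of_forall_adj_ne fun s hs hws => ?_
  rw [Function.update_self, ← hS hs]
  exact hw s hs hws

theorem piecewise [∀ v, Decidable (v ∈ S)] (hf : G.IsColoringOn f S) (hg : G.IsColoringOn g T)
    (hfg : (S ∩ T).EqOn f g) (hST : ∀ x ∈ S, ∀ y ∈ T, G.Adj x y → x ∈ T ∨ y ∈ S) :
    G.IsColoringOn (S.piecewise f g) (S ∪ T) := by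
  have key : ∀ x ∈ S, ∀ y ∈ T, y ∉ S → G.Adj x y → f x ≠ g y := fun x hx y hy hyS hxy => by
    rcases hST x hx y hy hxy with hxT | hyS'
    · rw [hfg ⟨hx, hxT⟩]; exact hg hxT hy hxy
    · exact absurd hyS' hyS
  rintro a ha b hb hab
  by_cases haS : a ∈ S <;> by_cases hbS : b ∈ S <;>
    simp only [Set.piecewise, haS, hbS, if_true, if_false]
  · exact hf haS hbS hab
  · exact key a haS b (hb.resolve_left hbS) hbS hab
  · exact (key b hbS a (ha.resolve_left haS) haS hab.symm).symm
  · exact hg (ha.resolve_left haS) (hb.resolve_left hbS) hab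

theorem colorable {n : ℕ} {f : V → Fin n} (hf : G.IsColoringOn f Set.univ) : G.Colorable n :=
  ⟨Coloring.mk f fun hab => hf trivial trivial hab⟩

end IsColoringOn

theorem exists_isColoringOn_of_ne_univ {n : ℕ} [NeZero n]
    (hcrit : ∀ H : G.Subgraph, H ≠ ⊤ → H.coe.Colorable n) {S : Set V} (hS : S ≠ Set.univ) :
    ∃ f : V → Fin n, G.IsColoringOn f S := by
  classical
  have hH : (⊤ : G.Subgraph).induce S ≠ ⊤ := fun h => hS <| by
    simpa using congrArg Subgraph.verts h
  obtain ⟨C⟩ := hcrit _ hH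
  refine ⟨fun w => if hw : w ∈ S then C ⟨w, hw⟩ else 0, fun a ha b hb hab => ?_⟩
  simpa [ha, hb] using C.valid (show ((⊤ : G.Subgraph).induce S).coe.Adj ⟨a, ha⟩ ⟨b, hb⟩ from
    ⟨ha, hb, hab⟩)

namespace Walk

theorem exists_length_lt_of_not_isChordless {p : G.Walk u v} (hp : ¬ p.IsChordless) :
    ∃ q : G.Walk u v, q.length < p.length ∧ q.support ⊆ p.support := by
  have shortcut : ∀ i j, i < j → j ≤ p.length → G.Adj (p.getVert i) (p.getVert j) →
      s(p.getVert i, p.getVert j) ∉ p.edges →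
      ∃ q : G.Walk u v, q.length < p.length ∧ q.support ⊆ p.support := by
    intro i j hij hj hadj hnot
    have hj' : i + 1 < j := by
      refine lt_of_le_of_ne hij fun h => hnot ?_
      subst h
      exact p.mk_mem_edges_iff_exists.mpr ⟨i, by omega, rfl⟩
    refine ⟨(p.take i).append (cons hadj (p.drop j)), ?_, ?_⟩
    · simp only [length_append, take_length, length_cons, drop_length]
      omega
    · intro z hz
      simp only [support_append, support_cons, List.tail_cons, List.mem_append] at hz
      rcases hz with hz | hz
      · exact (p.isSubwalk_take i).support_subset hz
      · exact (p.isSubwalk_drop j).support_subset hz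
  rw [isChordless_iff_forall_mem_edges] at hp
  push Not at hp
  obtain ⟨x, y, hx, hy, hxy, hnot⟩ := hp
  obtain ⟨i, rfl, hi⟩ := mem_support_iff_exists_getVert.mp hx
  obtain ⟨j, rfl, hj⟩ := mem_support_iff_exists_getVert.mp hy
  rcases lt_trichotomy i j with hij | rfl | hij
  · exact shortcut i j hij hj hxy hnot
  · exact absurd hxy G.irrefl
  · exact shortcut j i hij hi hxy.symm (Sym2.eq_swap ▸ hnot)

theorem exists_isPath_isChordless (w : G.Walk u v) :
    ∃ p : G.Walk u v, p.IsPath ∧ p.IsChordless ∧ p.support ⊆ w.support := by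
  classical
  induction hn : w.length using Nat.strong_induction_on generalizing w with
  | _ n ih =>
    by_cases hw : w.IsChordless
    · by_cases hb : w.length ≤ w.bypass.length
      · exact ⟨w, bypass_eq_self_of_length_le_length_bypass w hb ▸ w.bypass_isPath, hw,
          List.Subset.refl _⟩
      · obtain ⟨p, hp, hpc, hps⟩ := ih _ (by omega) w.bypass rfl
        exact ⟨p, hp, hpc, List.Subset.trans hps w.support_bypass_subset_support⟩
    · obtain ⟨q, hq, hqs⟩ := exists_length_lt_of_not_isChordless hw
      obtain ⟨p, hp, hpc, hps⟩ := ih _ (hn ▸ hq) q rfl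
      exact ⟨p, hp, hpc, List.Subset.trans hps hqs⟩

theorem IsPath.isCycle_append_reverse {p q : G.Walk u v} (hp : p.IsPath) (hq : q.IsPath)
    (huv : u ≠ v) (hadj : ¬ G.Adj u v)
    (hpq : ∀ z ∈ p.support, z ∈ q.support → z = u ∨ z = v) :
    (p.append q.reverse).IsCycle := by
  rw [isCycle_def]
  refine ⟨?_, fun h => ?_, ?_⟩
  · rw [isTrail_def, edges_append, edges_reverse]
    refine hp.isTrail.edges_nodup.append (List.nodup_reverse.mpr hq.isTrail.edges_nodup) ?_
    intro e hep heq
    induction e using Sym2.ind with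
    | _ x y =>
      rw [List.mem_reverse] at heq
      have hxy := p.adj_of_mem_edges hep
      rcases hpq x (p.fst_mem_support_of_mem_edges hep) (q.fst_mem_support_of_mem_edges heq)
        with rfl | rfl <;>
      rcases hpq y (p.snd_mem_support_of_mem_edges hep) (q.snd_mem_support_of_mem_edges heq)
        with rfl | rfl
      all_goals first | exact G.irrefl hxy | exact hadj hxy | exact hadj hxy.symm
  · have hnil := congrArg length h
    simp only [length_append, length_reverse, length_nil] at hnil
    exact huv (p.eq_of_length_eq_zero (by omega))
  · rw [support_append, List.tail_append_of_ne_nil p.support_ne_nil]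
    refine (hp.support_nodup.sublist (List.tail_sublist _)).append
      (hq.reverse.support_nodup.sublist (List.tail_sublist _)) ?_
    intro z hzp hzq
    have hzq' : z ∈ q.support := by
      simpa using List.mem_of_mem_tail hzq
    rcases hpq z (List.mem_of_mem_tail hzp) hzq' with rfl | rfl
    · exact (List.nodup_cons.mp (p.cons_tail_support ▸ hp.support_nodup)).1 hzp
    · exact (List.nodup_cons.mp (q.reverse.cons_tail_support ▸ hq.reverse.support_nodup)).1 hzq

theorem IsChordless.append_reverse {p q : G.Walk u v} (hp : p.IsChordless)
    (hq : q.IsChordless)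
    (hpq : ∀ x ∈ p.support, ∀ y ∈ q.support, G.Adj x y → x ∈ q.support ∨ y ∈ p.support) :
    (p.append q.reverse).IsChordless := by
  rw [isChordless_iff_forall_mem_edges]
  intro x y hx hy hxy
  simp only [mem_support_append_iff, support_reverse, List.mem_reverse] at hx hy
  rw [edges_append, edges_reverse, List.mem_append, List.mem_reverse]
  have hboth : (x ∈ p.support ∧ y ∈ p.support) ∨ (x ∈ q.support ∧ y ∈ q.support) := by
    rcases hx with hx | hx <;> rcases hy with hy | hy
    · exact .inl ⟨hx, hy⟩
    · rcases hpq x hx y hy hxy with hx' | hy'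
      exacts [.inr ⟨hx', hy⟩, .inl ⟨hx, hy'⟩]
    · rcases hpq y hy x hx hxy.symm with hy' | hx'
      exacts [.inr ⟨hx, hy'⟩, .inl ⟨hx', hy⟩]
    · exact .inr ⟨hx, hy⟩
  rcases hboth with ⟨hx, hy⟩ | ⟨hx, hy⟩
  · exact .inl (hp.mem_edges hx hy hxy)
  · exact .inr (hq.mem_edges hx hy hxy)

theorem two_le_length (p : G.Walk u v) (huv : u ≠ v) (hadj : ¬ G.Adj u v) :
    2 ≤ p.length := by
  have h0 : p.length ≠ 0 := fun h => huv (p.eq_of_length_eq_zero h)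
  have h1 : p.length ≠ 1 := fun h => hadj (p.adj_of_length_eq_one h)
  omega

theorem getVert_one_mem_commonNeighbors (p : G.Walk u v) (hp : p.length = 2) :
    p.getVert 1 ∈ G.commonNeighbors u v := by
  rw [mem_commonNeighbors]
  constructor
  · simpa using p.adj_getVert_succ (i := 0) (by omega)
  · have := (p.adj_getVert_succ (i := 1) (by omega)).symm
    rwa [p.getVert_of_length_le hp.le] at this

end Walk

theorem IsColoringOn.even_length_iff {φ : V → α} {T : Set V} {c d : α}
    (hφ : G.IsColoringOn φ T) (hT : ∀ z ∈ T, φ z = c ∨ φ z = d) :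
    ∀ {a b : V} (w : G.Walk a b), (∀ z ∈ w.support, z ∈ T) → (Even w.length ↔ φ a = φ b)
  | _, _, .nil, _ => by simp
  | a, b, .cons (v := x) hax w, hw => by
    have ha : a ∈ T := hw a (by simp)
    have hx : x ∈ T := hw x (by simp)
    have hb : b ∈ T := hw b (by simp)
    have hne := hφ ha hx hax
    rw [Walk.length_cons, Nat.even_add_one,
      hφ.even_length_iff hT w fun z hz => hw z (by simp [hz])]
    rcases hT a ha with h1 | h1 <;> rcases hT x hx with h2 | h2 <;>
      rcases hT b hb with h3 | h3 <;> simp_all [eq_comm]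

theorem subsingleton_commonNeighbors_of_four_lt_egirth (hG : 4 < G.egirth) (huv : u ≠ v) :
    (G.commonNeighbors u v).Subsingleton := by
  intro m₁ hm₁ m₂ hm₂
  rw [mem_commonNeighbors] at hm₁ hm₂
  by_contra hne
  let c : G.Walk u u :=
    .cons hm₁.1 (.cons hm₁.2.symm (.cons hm₂.2 (.cons hm₂.1.symm .nil)))
  have hc : c.IsCycle := by
    simp [c, Walk.cons_isCycle_iff, hne, hm₁.1.ne', hm₁.2.ne', hm₂.1.ne', hm₂.2.ne, huv, huv.symm]
  have := G.egirth_le_length hc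
  simp only [c, Walk.length_cons, Walk.length_nil] at this
  exact this.not_gt hG

theorem hasHole_length_add_length {A B : Set V} {p q : G.Walk u v} (hp : p.IsPath)
    (hpc : p.IsChordless) (hq : q.IsPath) (hqc : q.IsChordless)
    (hpA : ∀ z ∈ p.support, z ∈ insert u (insert v A))
    (hqB : ∀ z ∈ q.support, z ∈ insert u (insert v B))
    (hAB : Disjoint A B) (hedge : ∀ a ∈ A, ∀ b ∈ B, ¬ G.Adj a b) (huv : u ≠ v)
    (hadj : ¬ G.Adj u v) (hlen : 4 ≤ p.length + q.length) :
    G.HasHole (p.length + q.length) := by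
  refine ⟨hlen, u, p.append q.reverse, hp.isCycle_append_reverse hq huv hadj ?_,
    Walk.isInduced_toSubgraph.mpr (hpc.append_reverse hqc ?_), by simp⟩
  · intro z hzp hzq
    rcases hpA z hzp with rfl | rfl | hzA
    · exact .inl rfl
    · exact .inr rfl
    · rcases hqB z hzq with rfl | rfl | hzB
      · exact .inl rfl
      · exact .inr rfl
      · exact absurd hzB (Set.disjoint_left.mp hAB hzA)
  · intro x hx y hy hxy
    rcases hpA x hx with rfl | rfl | hxA
    · exact .inl q.start_mem_support
    · exact .inl q.end_mem_support
    · rcases hqB y hy with rfl | rfl | hyB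
      · exact .inr p.start_mem_support
      · exact .inr p.end_mem_support
      · exact absurd hxy (hedge x hxA y hyB)

namespace IsColoringOn

variable [DecidableEq α] {φ : V → α}

theorem swap_of_closed {S U : Set V} [DecidablePred (· ∈ U)] {c d : α}
    (hφ : G.IsColoringOn φ S) (hU : ∀ a ∈ U, φ a = c ∨ φ a = d)
    (hclosed : ∀ a ∈ U, ∀ b ∈ S, G.Adj a b → φ b = c ∨ φ b = d → b ∈ U) :
    G.IsColoringOn (U.piecewise (Equiv.swap c d ∘ φ) φ) S := by
  have key : ∀ a ∈ U, ∀ b, ¬ (φ b = c ∨ φ b = d) → Equiv.swap c d (φ a) ≠ φ b := by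
    intro a ha b hb h
    apply hb
    rcases hU a ha with h' | h' <;> rw [h'] at h <;> simp at h <;> tauto
  intro a ha b hb hab
  by_cases haU : a ∈ U <;> by_cases hbU : b ∈ U <;>
    simp only [Set.piecewise, haU, hbU, if_true, if_false, Function.comp_apply]
  · exact (Equiv.swap c d).injective.ne (hφ ha hb hab)
  · exact key a haU b fun h => hbU (hclosed a haU b hb hab h)
  · exact (key b hbU a fun h => haU (hclosed b hbU a ha hab.symm h)).symm
  · exact hφ ha hb hab

theorem exists_recolor_or_exists_walk {S : Set V}
    (hφ : G.IsColoringOn φ (insert u (insert v S))) (hu : u ∉ S) (hv : v ∉ S) (huv : u ≠ v)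
    (hadj : ¬ G.Adj u v) (c : α) (hvc : φ v = c ∨ φ v = φ u) :
    (∃ χ : V → α, G.IsColoringOn χ (insert u (insert v S)) ∧ χ u = c ∧ χ v = φ v) ∨
      ∃ p : G.Walk u v, ∀ z ∈ p.support, z ∈ insert u (insert v S) ∧ (φ z = c ∨ φ z = φ u) := by
  classical
  set T : Set V := {z | z ∈ insert u (insert v S) ∧ (φ z = c ∨ φ z = φ u)}
  by_cases hwalk : ∃ p : G.Walk u v, ∀ z ∈ p.support, z ∈ T
  · exact .inr hwalk
  refine .inl ?_
  have hST : ∀ {s}, s ∈ S → (φ s = c ∨ φ s = φ u) → s ∈ T := fun hs hsc => ⟨.inr (.inr hs), hsc⟩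
  have hext : ∀ {a b}, (∃ p : G.Walk u a, ∀ y ∈ p.support, y ∈ T) → G.Adj a b → b ∈ T →
      ∃ p : G.Walk u b, ∀ y ∈ p.support, y ∈ T := by
    rintro a b ⟨p, hp⟩ hab hb
    refine ⟨p.concat hab, fun y hy => ?_⟩
    rw [Walk.support_concat, List.mem_append, List.mem_singleton] at hy
    rcases hy with hy | rfl
    exacts [hp y hy, hb]
  -- `U` is the Kempe chain of `u` for the colours `c` and `φ u`, restricted to `S`.
  set U : Set V := {s | s ∈ S ∧ ∃ p : G.Walk u s, ∀ y ∈ p.support, y ∈ T}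
  have hUcol : ∀ s ∈ U, φ s = c ∨ φ s = φ u := fun s ⟨_, p, hp⟩ => (hp s p.end_mem_support).2
  have hUv : ∀ s ∈ U, ¬ G.Adj s v := fun s hs hsv => by
    obtain ⟨p, hp⟩ := hext hs.2 hsv ⟨.inr (.inl rfl), hvc⟩
    exact hwalk ⟨p, hp⟩
  set ψ := U.piecewise (Equiv.swap c (φ u) ∘ φ) φ
  have hψ : ∀ z ∉ U, ψ z = φ z := fun z hz => Set.piecewise_eq_of_notMem _ _ _ hz
  have hvU : v ∉ U := fun h => hv h.1
  have hψS : G.IsColoringOn ψ S :=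
    (hφ.mono fun s hs => .inr (.inr hs)).swap_of_closed hUcol
      fun a ha b hb hab hbc => ⟨hb, hext ha.2 hab (hST hb hbc)⟩
  have hψv : G.IsColoringOn ψ (insert v S) := hψS.insert_of_forall_adj_ne fun s hs hvs => by
    rw [hψ s fun h => hUv s h hvs.symm, hψ v hvU]
    exact hφ (.inr (.inr hs)) (.inr (.inl rfl)) hvs.symm
  refine ⟨Function.update ψ u c, hψv.update_insert ?_ ?_, Function.update_self .., ?_⟩
  · rintro (h | h)
    exacts [huv h, hu h]
  · rintro s (rfl | hs) hus
    · exact absurd hus hadj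
    have hsu : φ s ≠ φ u := hφ (.inr (.inr hs)) (.inl rfl) hus.symm
    by_cases hsU : s ∈ U
    · have hsc : φ s = c := (hUcol s hsU).resolve_right hsu
      simp only [ψ, Set.piecewise_eq_of_mem _ _ _ hsU, Function.comp_apply, hsc,
        Equiv.swap_apply_left]
      exact fun h => hsu (hsc.trans h.symm)
    · rw [hψ s hsU]
      intro hsc
      exact hsU ⟨hs, hext ⟨.nil, by simp [T]⟩ hus (hST hs (.inl hsc))⟩
  · rw [Function.update_of_ne huv.symm, hψ v hvU]

theorem exists_isPath_isChordless_of_forall_ne {S : Set V}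
    (hφ : G.IsColoringOn φ (insert u (insert v S))) (hu : u ∉ S) (hv : v ∉ S) (huv : u ≠ v)
    (hadj : ¬ G.Adj u v) {c : α} (hvc : φ v = c ∨ φ v = φ u)
    (hrec : ∀ χ, G.IsColoringOn χ (insert u (insert v S)) → χ u = c → χ v ≠ φ v) :
    ∃ p : G.Walk u v, p.IsPath ∧ p.IsChordless ∧
      (∀ z ∈ p.support, z ∈ insert u (insert v S) ∧ (φ z = c ∨ φ z = φ u)) ∧
      (Even p.length ↔ φ u = φ v) := by
  obtain ⟨χ, hχ, hχu, hχv⟩ | ⟨w, hw⟩ := hφ.exists_recolor_or_exists_walk hu hv huv hadj c hvc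
  · exact absurd hχv (hrec χ hχ hχu)
  obtain ⟨p, hp, hpc, hps⟩ := w.exists_isPath_isChordless
  have hpT : ∀ z ∈ p.support, z ∈ insert u (insert v S) ∧ (φ z = c ∨ φ z = φ u) :=
    fun z hz => hw z (hps hz)
  exact ⟨p, hp, hpc, hpT, (hφ.mono fun _ hz => hz.1).even_length_iff
    (T := {z | z ∈ insert u (insert v S) ∧ (φ z = c ∨ φ z = φ u)}) (fun _ hz => hz.2) p hpT⟩

end IsColoringOn

theorem length_eq_two_of_even_of_odd (hholes : ∀ n, Odd n → 7 ≤ n → ¬ G.HasHole n)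
    {A B : Set V} {p q : G.Walk u v} (hp : p.IsPath) (hpc : p.IsChordless) (hq : q.IsPath)
    (hqc : q.IsChordless) (hpA : ∀ z ∈ p.support, z ∈ insert u (insert v A))
    (hqB : ∀ z ∈ q.support, z ∈ insert u (insert v B)) (hAB : Disjoint A B)
    (hedge : ∀ a ∈ A, ∀ b ∈ B, ¬ G.Adj a b) (huv : u ≠ v) (hadj : ¬ G.Adj u v)
    (hpeven : Even p.length) (hqodd : Odd q.length) : p.length = 2 := by
  have hp2 := p.two_le_length huv hadj
  have hq2 := q.two_le_length huv hadj
  by_contra hne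
  have hp4 : 4 ≤ p.length := by
    obtain ⟨k, hk⟩ := hpeven
    omega
  have hq3 : 3 ≤ q.length := by
    obtain ⟨k, hk⟩ := hqodd
    omega
  exact hholes _ (hpeven.add_odd hqodd) (by omega) <|
    hasHole_length_add_length hp hpc hq hqc hpA hqB hAB hedge huv hadj (by omega)

theorem false_of_forall_eq_of_forall_ne (hgirth : 4 < G.egirth)
    (hholes : ∀ n, Odd n → 7 ≤ n → ¬ G.HasHole n) {A B : Set V} (huv : u ≠ v)
    (huA : u ∉ A) (hvA : v ∉ A) (huB : u ∉ B) (hvB : v ∉ B) (hAB : Disjoint A B)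
    (hedge : ∀ a ∈ A, ∀ b ∈ B, ¬ G.Adj a b) {f g : V → Fin 3}
    (hf : G.IsColoringOn f (insert u (insert v A))) (hg : G.IsColoringOn g (insert u (insert v B)))
    (hsame : ∀ f' : V → Fin 3, G.IsColoringOn f' (insert u (insert v A)) → f' u = f' v)
    (hdiff : ∀ g' : V → Fin 3, G.IsColoringOn g' (insert u (insert v B)) → g' u ≠ g' v) :
    False := by
  have hfuv : f u = f v := hsame f hf
  have hadj : ¬ G.Adj u v := fun h => hf (.inl rfl) (.inr (.inl rfl)) h hfuv
  obtain ⟨q, hq, hqc, hqB, hqpar⟩ := hg.exists_isPath_isChordless_of_forall_ne huB hvB huv hadj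
    (c := g v) (.inl rfl) fun χ hχ hχu hχv => hdiff χ hχ (hχu.trans hχv.symm)
  have hqodd : Odd q.length := Nat.not_even_iff_odd.mp fun h => hdiff g hg (hqpar.mp h)
  have hmid : ∀ c ≠ f u, ∃ m ∈ G.commonNeighbors u v, f m = c := by
    intro c hc
    obtain ⟨p, hp, hpc, hpA, hppar⟩ := hf.exists_isPath_isChordless_of_forall_ne huA hvA huv
      hadj (c := c) (.inr hfuv.symm) fun χ hχ hχu hχv => hc (by rw [← hχu, hsame χ hχ, hχv, hfuv])
    have hp2 : p.length = 2 := length_eq_two_of_even_of_odd hholes hp hpc hq hqc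
      (fun z hz => (hpA z hz).1) (fun z hz => (hqB z hz).1) hAB hedge huv hadj
      (hppar.mpr hfuv) hqodd
    have hm := p.getVert_one_mem_commonNeighbors hp2
    refine ⟨_, hm, (hpA _ (p.getVert_mem_support 1)).2.resolve_right fun h => ?_⟩
    exact hf (hpA _ (p.getVert_mem_support 1)).1 (.inl rfl) hm.1.symm h
  obtain ⟨c₁, c₂, h₁, h₂, h₁₂⟩ : ∃ c₁ c₂ : Fin 3, c₁ ≠ f u ∧ c₂ ≠ f u ∧ c₁ ≠ c₂ := by
    generalize f u = c
    revert c
    decide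
  obtain ⟨m₁, hm₁, rfl⟩ := hmid c₁ h₁
  obtain ⟨m₂, hm₂, rfl⟩ := hmid c₂ h₂
  exact h₁₂ (congrArg f (subsingleton_commonNeighbors_of_four_lt_egirth hgirth huv hm₁ hm₂))

theorem exists_separation_of_not_connected_induce {W : Set V} (hW : W.Nonempty)
    (h : ¬ (G.induce W).Connected) :
    ∃ A B : Set V, A.Nonempty ∧ B.Nonempty ∧ Disjoint A B ∧ A ∪ B = W ∧
      ∀ a ∈ A, ∀ b ∈ B, ¬ G.Adj a b := by
  have hpre : ¬ (G.induce W).Preconnected := fun hp =>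
    h ((connected_iff _).mpr ⟨hp, hW.to_subtype⟩)
  simp only [Preconnected, not_forall] at hpre
  obtain ⟨x, y, hxy⟩ := hpre
  let A : Set V := {w | ∃ hw : w ∈ W, (G.induce W).Reachable x ⟨w, hw⟩}
  refine ⟨A, W \ A, ⟨x, x.2, .rfl⟩, ⟨y, y.2, fun ⟨_, h⟩ => hxy h⟩, Set.disjoint_sdiff_right,
    Set.union_sdiff_cancel fun w ⟨hw, _⟩ => hw, ?_⟩
  rintro a ⟨ha, hxa⟩ b ⟨hb, hbA⟩ hab
  exact hbA ⟨hb, hxa.trans (Adj.reachable (show (G.induce W).Adj ⟨a, ha⟩ ⟨b, hb⟩ from hab))⟩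

theorem colorable_of_isColoringOn_union {n : ℕ} {X A B : Set V} (hAB : Disjoint A B)
    (hcover : A ∪ B = Xᶜ) (hedge : ∀ a ∈ A, ∀ b ∈ B, ¬ G.Adj a b) {f g : V → Fin n}
    (σ : Equiv.Perm (Fin n)) (hf : G.IsColoringOn f (A ∪ X)) (hg : G.IsColoringOn g (B ∪ X))
    (hfg : ∀ x ∈ X, σ (g x) = f x) : G.Colorable n := by
  classical
  refine IsColoringOn.colorable (f := (A ∪ X).piecewise f (σ ∘ g)) <|
    (hf.piecewise (hg.comp σ.injective) ?_ ?_).mono fun z _ => ?_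
  · rintro z ⟨hzA | hzX, hzB | hzX'⟩
    · exact absurd hzB (Set.disjoint_left.mp hAB hzA)
    all_goals exact (hfg z ‹_›).symm
  · rintro x (hxA | hxX) y (hyB | hyX) hxy
    · exact absurd hxy (hedge x hxA y hyB)
    all_goals first | exact .inl (.inr ‹_›) | exact .inr (.inr ‹_›)
  · by_cases hz : z ∈ X
    · exact .inl (.inr hz)
    · rcases (hcover ▸ hz : z ∈ A ∪ B) with hzA | hzB
      exacts [.inl (.inl hzA), .inr (.inl hzB)]

theorem colorable_of_separation [Finite V] (hgirth : 4 < G.egirth)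
    (hholes : ∀ n, Odd n → 7 ≤ n → ¬ G.HasHole n)
    (hcrit : ∀ H : G.Subgraph, H ≠ ⊤ → H.coe.Colorable 3) {X A B : Set V} (hX : X.ncard ≤ 2)
    (hA : A.Nonempty) (hB : B.Nonempty) (hAB : Disjoint A B) (hcover : A ∪ B = Xᶜ)
    (hedge : ∀ a ∈ A, ∀ b ∈ B, ¬ G.Adj a b) : G.Colorable 3 := by
  classical
  have hAX : ∀ {z}, z ∈ A → z ∉ X := fun {z} hz => (hcover ▸ Or.inl hz : z ∈ Xᶜ)
  have hBX : ∀ {z}, z ∈ B → z ∉ X := fun {z} hz => (hcover ▸ Or.inr hz : z ∈ Xᶜ)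
  obtain ⟨f, hf⟩ := exists_isColoringOn_of_ne_univ hcrit (S := A ∪ X) fun h => by
    obtain ⟨b, hb⟩ := hB
    rcases (h ▸ Set.mem_univ b : b ∈ A ∪ X) with hbA | hbX
    exacts [Set.disjoint_left.mp hAB hbA hb, hBX hb hbX]
  obtain ⟨g, hg⟩ := exists_isColoringOn_of_ne_univ hcrit (S := B ∪ X) fun h => by
    obtain ⟨a, ha⟩ := hA
    rcases (h ▸ Set.mem_univ a : a ∈ B ∪ X) with haB | haX
    exacts [Set.disjoint_left.mp hAB ha haB, hAX ha haX]
  interval_cases hXc : X.ncard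
  · rw [Set.ncard_eq_zero] at hXc
    exact colorable_of_isColoringOn_union hAB hcover hedge 1 hf hg (by simp [hXc])
  · obtain ⟨a, rfl⟩ := Set.ncard_eq_one.mp hXc
    exact colorable_of_isColoringOn_union hAB hcover hedge (Equiv.swap (g a) (f a)) hf hg
      (by simp)
  · obtain ⟨a, b, hab, rfl⟩ := Set.ncard_eq_two.mp hXc
    by_contra hcol
    have hpat : ∀ f' g' : V → Fin 3, G.IsColoringOn f' (A ∪ {a, b}) →
        G.IsColoringOn g' (B ∪ {a, b}) → (f' a = f' b ↔ g' a ≠ g' b) := by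
      intro f' g' hf' hg'
      by_contra hne
      obtain ⟨σ, hσa, hσb⟩ := Equiv.Perm.exists_apply_eq_and_apply_eq (a := g' a) (b := g' b)
        (c := f' a) (d := f' b) (by tauto)
      exact hcol (colorable_of_isColoringOn_union hAB hcover hedge σ hf' hg' (by simp [hσa, hσb]))
    have haA := hAX (z := a) |>.mt (· (.inl rfl))
    have hbA := hAX (z := b) |>.mt (· (.inr rfl))
    have haB := hBX (z := a) |>.mt (· (.inl rfl))
    have hbB := hBX (z := b) |>.mt (· (.inr rfl))
    simp only [Set.union_insert, Set.union_singleton] at hpat hf hg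
    by_cases hfab : f a = f b
    · exact false_of_forall_eq_of_forall_ne hgirth hholes hab haA hbA haB hbB hAB hedge hf hg
        (fun f' hf' => by have := hpat f g hf hg; have := hpat f' g hf' hg; tauto)
        (fun g' hg' => (hpat f g' hf hg').mp hfab)
    · exact false_of_forall_eq_of_forall_ne hgirth hholes hab haB hbB haA hbA hAB.symm
        (fun b hb a ha hba => hedge a ha b hb hba.symm) hg hf
        (fun g' hg' => by have := hpat f g' hf hg'; tauto)
        (fun f' hf' => by have := hpat f g hf hg; have := hpat f' g hf' hg; tauto)

end SimpleGraph

/-- every graph `G ∈ 𝒢₀` is 3-connected. -/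
theorem stmt_5 {V : Type*} [Fintype V] (G : SimpleGraph V) (hG : G.MemG0) :
    G.ThreeConnected := by
  obtain ⟨⟨hgirth, hholes⟩, hχ, hcrit⟩ := hG
  have hncol : ¬ G.Colorable 3 := fun h => absurd (hχ ▸ h.chromaticNumber_le) (by norm_num)
  have hcard : 3 < Fintype.card V := lt_of_not_ge fun h => hncol (G.colorable_of_fintype.mono h)
  refine ⟨hcard, fun X hX => by_contra fun hconn => hncol ?_⟩
  have hXc : Xᶜ.Nonempty := Set.nonempty_compl.mpr fun h => by
    rw [h, Set.ncard_univ, Nat.card_eq_fintype_card] at hX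
    omega
  obtain ⟨A, B, hA, hB, hAB, hcover, hedge⟩ := exists_separation_of_not_connected_induce hXc hconn
  exact colorable_of_separation (by rw [hgirth]; decide) hholes hcrit hX hA hB hAB hcover hedge
end

section
/- Let G be a 3-connected graph in 𝒢₂ such that every 3-cutset of G is stable. If G has an induced subgraph isomorphic to the Petersen graph, then G is itself isomorphic to the Petersen graph. -/
/-!
Let `f` embed the Petersen graph `P` in `G` as an induced subgraph and suppose some vertex of `G`
lies outside the copy. Since `G` has girth 5 and any two vertices of `P` are at distance at most 2,
every outside vertex has at most one neighbour on the copy. By 3-connectivity some component of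
`G` minus the copy attaches to two nonadjacent vertices `a`, `b` of `P`, which gives an *ear*: a path
from `a` to `b` meeting the copy only in its ends. A shortest ear is chordless, has length `k ≥ 3`,
and its inner vertices see no vertex of `P` except `a`, `b` and their common neighbours. Now `P` has
chordless `b`–`a` paths of lengths 3 and 4 avoiding those common neighbours; closing the ear with
the one making the total length odd produces an odd hole of length at least 7.
-/

open SimpleGraph

/-- The Petersen graph, realized as the Kneser graph of 2-element subsets of a 5-set:
two 2-subsets are adjacent iff they are disjoint. -/
def petersen : SimpleGraph {s : Finset (Fin 5) // s.card = 2} where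
  Adj a b := Disjoint (a : Finset (Fin 5)) (b : Finset (Fin 5))
  symm := ⟨fun a b h => h.symm⟩
  loopless := ⟨fun a h => by
    have h' : (a : Finset (Fin 5)) = ∅ := by simpa using disjoint_self.mp h
    have := a.property
    rw [h'] at this
    simp at this⟩

namespace SimpleGraph

variable {V W : Type*} {G : SimpleGraph V} {H : SimpleGraph W}

theorem not_adj_of_adj_of_adj_of_three_lt_egirth (hG : 3 < G.egirth) {x y z : V}
    (hxy : G.Adj x y) (hyz : G.Adj y z) : ¬ G.Adj z x := by
  intro hzx
  have hc : (Walk.cons hxy (.cons hyz (.cons hzx .nil))).IsCycle := by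
    rw [Walk.cons_isCycle_iff]
    simp [hyz.ne, hzx.ne, hxy.ne.symm, hzx.ne.symm]
  simpa using hG.trans_le (egirth_le_length hc)

theorem eq_of_adj_of_four_lt_egirth (hG : 4 < G.egirth) {x y z t : V}
    (hxy : G.Adj x y) (hyz : G.Adj y z) (hzt : G.Adj z t) (htx : G.Adj t x) (hyt : y ≠ t) :
    x = z := by
  by_contra hxz
  have hc : (Walk.cons hxy (.cons hyz (.cons hzt (.cons htx .nil)))).IsCycle := by
    rw [Walk.cons_isCycle_iff]
    simp [hxy.ne, hyz.ne, hzt.ne, htx.ne, hxy.ne.symm, htx.ne.symm, hxz, hyt, Ne.symm hxz]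
  simpa using hG.trans_le (egirth_le_length hc)

theorem IsClique.ncard_le_two (hH : H.CliqueFree 3) {A : Set W} (hA : H.IsClique A) :
    A.ncard ≤ 2 := by
  classical
  by_contra! h
  obtain ⟨p, hp, q, hq, r, hr, hpq, hpr, hqr⟩ :=
    (Set.two_lt_ncard (Set.finite_of_ncard_pos (by omega))).mp h
  exact hH {p, q, r} (is3Clique_triple_iff.mpr ⟨hA hp hq hpq, hA hp hr hpr, hA hq hr hqr⟩)

namespace Walk

variable {u v w : V}

theorem IsPath.start_notMem_support_tail {p : G.Walk u v} (hp : p.IsPath) :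
    u ∉ p.support.tail :=
  (List.nodup_cons.mp (p.cons_tail_support ▸ hp.support_nodup)).1

theorem IsChordless.append {p : G.Walk u v} {q : G.Walk v w} (hp : p.IsChordless)
    (hq : q.IsChordless)
    (h : ∀ x ∈ p.support, ∀ y ∈ q.support, G.Adj x y → x ∈ q.support ∨ y ∈ p.support) :
    (p.append q).IsChordless := by
  rw [isChordless_iff_forall_mem_edges]
  intro x y hx hy hxy
  rw [mem_support_append_iff] at hx hy
  rw [edges_append, List.mem_append]
  rcases hx with hx | hx <;> rcases hy with hy | hy
  · exact .inl (hp.mem_edges hx hy hxy)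
  · rcases h x hx y hy hxy with hx' | hy'
    · exact .inr (hq.mem_edges hx' hy hxy)
    · exact .inl (hp.mem_edges hx hy' hxy)
  · rcases h y hy x hx hxy.symm with hy' | hx'
    · exact .inr (hq.mem_edges hx hy' hxy)
    · exact .inl (hp.mem_edges hx' hy hxy)
  · exact .inr (hq.mem_edges hx hy hxy)

theorem IsChordless.map_embedding (f : H ↪g G) {a b : W} {q : H.Walk a b}
    (hq : q.IsChordless) : (q.map f.toHom).IsChordless := by
  rw [isChordless_iff_forall_mem_edges, support_map, edges_map]
  simp only [List.mem_map]
  rintro _ _ ⟨x, hx, rfl⟩ ⟨y, hy, rfl⟩ hxy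
  exact ⟨s(x, y), hq.mem_edges hx hy (f.map_adj_iff.mp hxy), rfl⟩

/-- Shortcutting `w` along a chord would give a shorter path inside the vertex set of `w`. -/
theorem isChordless_of_forall_length_le {w : G.Walk u v}
    (h : ∀ p : G.Walk u v, p.IsPath → p.support ⊆ w.support → w.length ≤ p.length) :
    w.IsChordless := by
  classical
  have key : ∀ {x y : V} (t : G.Walk u x) (m : G.Walk x y) (e : G.Walk y v),
      w = t.append (m.append e) → G.Adj x y → s(x, y) ∈ w.edges := by
    intro x y t m e hw hxy
    by_cases hm : m.length ≤ 1
    · obtain h0 | h1 : m.length = 0 ∨ m.length = 1 := by omega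
      · exact absurd (eq_of_length_eq_zero h0) hxy.ne
      · cases m with
        | nil => simp at h1
        | cons h m' =>
          cases m' with
          | nil => simp [hw]
          | cons _ _ => simp at h1
    · let p := t.append (cons hxy e)
      have hsub : p.bypass.support ⊆ w.support := by
        refine List.Subset.trans p.support_bypass_subset_support fun z hz => ?_
        simp only [p, hw, mem_support_append_iff, support_cons, List.mem_cons] at hz ⊢
        rcases hz with hz | rfl | hz
        · exact .inl hz
        · exact .inr (.inl m.start_mem_support)
        · exact .inr (.inr hz)
      have hle := h _ p.bypass_isPath hsub
      have hbypass := p.length_bypass_le_length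
      have hw' : w.length = t.length + (m.length + e.length) := by
        rw [hw, length_append, length_append]
      have hp : p.length = t.length + (e.length + 1) := by simp [p, length_append]
      omega
  rw [isChordless_iff_forall_mem_edges]
  intro x y hx hy hxy
  obtain ⟨t, d, hw⟩ := mem_support_iff_exists_append.mp hx
  rcases (mem_support_append_iff t d).mp (hw ▸ hy) with hy | hy
  · obtain ⟨t', m, rfl⟩ := mem_support_iff_exists_append.mp hy
    rw [Sym2.eq_swap]
    exact key t' m d (by rw [hw, append_assoc]) hxy.symm
  · obtain ⟨m, e, rfl⟩ := mem_support_iff_exists_append.mp hy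
    exact key t m e hw hxy

end Walk

theorem Embedding.eq_of_adj_of_adj (hG : 4 < G.egirth)
    (hH : ∀ p q, p ≠ q → ¬ H.Adj p q → ∃ c, H.Adj p c ∧ H.Adj q c) (f : H ↪g G) {y : V}
    (hy : y ∉ Set.range f) {p q : W} (hp : G.Adj y (f p)) (hq : G.Adj y (f q)) : p = q := by
  by_contra hpq
  by_cases hadj : H.Adj p q
  · exact not_adj_of_adj_of_adj_of_three_lt_egirth ((by norm_num : (3 : ℕ∞) < 4).trans hG) hp
      (f.map_adj_iff.mpr hadj) hq.symm
  · obtain ⟨c, hpc, hqc⟩ := hH p q hpq hadj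
    exact hy ⟨c, (eq_of_adj_of_four_lt_egirth hG hp (f.map_adj_iff.mpr hpc)
      (f.map_adj_iff.mpr hqc).symm hq.symm (f.injective.ne hpq)).symm⟩

section Ear

variable (f : H ↪g G)

structure IsEar {a b : W} (w : G.Walk (f a) (f b)) : Prop where
  ne : a ≠ b
  not_adj : ¬ H.Adj a b
  isPath : w.IsPath
  eq_or_eq_of_mem_range : ∀ v ∈ w.support, v ∈ Set.range f → v = f a ∨ v = f b

structure IsShortestEar {a b : W} (w : G.Walk (f a) (f b)) : Prop extends IsEar f w where
  length_le : ∀ ⦃a' b' : W⦄ (w' : G.Walk (f a') (f b')), IsEar f w' → w.length ≤ w'.length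

variable {f} {a b : W} {w : G.Walk (f a) (f b)}

theorem IsEar.reverse (hw : IsEar f w) : IsEar f w.reverse where
  ne := hw.ne.symm
  not_adj h := hw.not_adj h.symm
  isPath := hw.isPath.reverse
  eq_or_eq_of_mem_range v hv hvf :=
    (hw.eq_or_eq_of_mem_range v (by simpa using hv) hvf).symm

theorem IsShortestEar.reverse (hw : IsShortestEar f w) : IsShortestEar f w.reverse :=
  ⟨hw.toIsEar.reverse, fun _ _ w' hw' => by simpa using hw.length_le w' hw'⟩

theorem exists_isShortestEar (h : ∃ a b, ∃ w : G.Walk (f a) (f b), IsEar f w) :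
    ∃ a b, ∃ w : G.Walk (f a) (f b), IsShortestEar f w := by
  classical
  have hn : ∃ n a b, ∃ w : G.Walk (f a) (f b), IsEar f w ∧ w.length = n := by
    obtain ⟨a, b, w, hw⟩ := h
    exact ⟨_, a, b, w, hw, rfl⟩
  obtain ⟨a, b, w, hw, hlen⟩ := Nat.find_spec hn
  exact ⟨a, b, w, hw, fun a' b' w' hw' => hlen ▸ Nat.find_min' hn ⟨a', b', w', hw', rfl⟩⟩

theorem IsShortestEar.isChordless (hw : IsShortestEar f w) : w.IsChordless :=
  Walk.isChordless_of_forall_length_le fun p hp hsub =>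
    hw.length_le p ⟨hw.ne, hw.not_adj, hp, fun v hv => hw.eq_or_eq_of_mem_range v (hsub hv)⟩

/-- Otherwise the part of `w` up to `y`, followed by the edge to `f s`, is a shorter ear. -/
theorem IsShortestEar.adj_of_adj (hw : IsShortestEar f w)
    (hf : ∀ y ∉ Set.range f, ∀ ⦃p q⦄, G.Adj y (f p) → G.Adj y (f q) → p = q) {y : V}
    (hy : y ∈ w.support) (hyf : y ∉ Set.range f) {s : W} (hs : G.Adj y (f s)) (hsa : s ≠ a)
    (hsb : s ≠ b) : H.Adj a s := by
  classical
  by_contra hnadj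
  have hfb : f b ∉ (w.takeUntil y hy).support :=
    Walk.endpoint_notMem_support_takeUntil hw.isPath hy fun h => hyf ⟨b, h⟩
  have hfs : f s ∉ w.support := fun h => by
    rcases hw.eq_or_eq_of_mem_range _ h ⟨s, rfl⟩ with h | h
    exacts [hsa (f.injective h), hsb (f.injective h)]
  have hear : IsEar f ((w.takeUntil y hy).concat hs) := by
    refine ⟨hsa.symm, hnadj, (hw.isPath.takeUntil hy).concat
      (fun h => hfs (w.support_takeUntil_subset_support hy h)) hs, fun v hv hvf => ?_⟩
    rw [Walk.support_concat, List.mem_append, List.mem_singleton] at hv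
    rcases hv with hv | rfl
    · rcases hw.eq_or_eq_of_mem_range v (w.support_takeUntil_subset_support hy hv) hvf with h | h
      · exact .inl h
      · exact absurd (h ▸ hv) hfb
    · exact .inr rfl
  have hlen : w.length = (w.takeUntil y hy).length + (w.dropUntil y hy).length := by
    rw [← Walk.length_append, Walk.take_spec]
  have hle := hw.length_le _ hear
  rw [Walk.length_concat] at hle
  obtain h0 | h1 : (w.dropUntil y hy).length = 0 ∨ (w.dropUntil y hy).length = 1 := by omega
  · exact hyf ⟨b, (Walk.eq_of_length_eq_zero h0).symm⟩
  · exact hsb (hf y hyf hs (Walk.adj_of_length_eq_one h1))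

theorem IsShortestEar.three_le_length (hw : IsShortestEar f w)
    (hf : ∀ y ∉ Set.range f, ∀ ⦃p q⦄, G.Adj y (f p) → G.Adj y (f q) → p = q) :
    3 ≤ w.length := by
  by_contra! h
  obtain h0 | h1 | h2 : w.length = 0 ∨ w.length = 1 ∨ w.length = 2 := by omega
  · exact hw.ne (f.injective (Walk.eq_of_length_eq_zero h0))
  · exact hw.not_adj (f.map_adj_iff.mp (Walk.adj_of_length_eq_one h1))
  · have hay : G.Adj (f a) (w.getVert 1) := by simpa using w.adj_getVert_succ (i := 0) (by omega)
    have hyb : G.Adj (w.getVert 1) (f b) := by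
      simpa [w.getVert_of_length_le h2.le] using w.adj_getVert_succ (i := 1) (by omega)
    have hyf : w.getVert 1 ∉ Set.range f := by
      intro hyf
      rcases hw.eq_or_eq_of_mem_range _ (w.getVert_mem_support 1) hyf with h | h
      exacts [hay.ne h.symm, hyb.ne h]
    exact hw.ne (hf _ hyf hay.symm hyb)

theorem IsShortestEar.hasHole_append (hw : IsShortestEar f w)
    (hf : ∀ y ∉ Set.range f, ∀ ⦃p q⦄, G.Adj y (f p) → G.Adj y (f q) → p = q)
    {q : H.Walk b a} (hq : q.IsPath) (hqc : q.IsChordless)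
    (hqab : ∀ s ∈ q.support, H.Adj a s → ¬ H.Adj b s) :
    G.HasHole (w.length + q.length) := by
  have hk := hw.three_le_length hf
  have hq0 : q.length ≠ 0 := fun h => hw.ne (Walk.eq_of_length_eq_zero h).symm
  have hcyc : (w.append (q.map f.toHom)).IsCycle := by
    refine hw.isPath.isCycle_append (hq.map f.injective) (fun x hxw hxq => ?_) (.inl (by omega))
    have hxf : x ∈ Set.range f := by
      obtain ⟨s, -, rfl⟩ := List.mem_map.mp (Walk.support_map _ q ▸ List.mem_of_mem_tail hxq)
      exact ⟨s, rfl⟩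
    rcases hw.eq_or_eq_of_mem_range x (List.mem_of_mem_tail hxw) hxf with rfl | rfl
    · exact hw.isPath.start_notMem_support_tail hxw
    · exact (hq.map f.injective).start_notMem_support_tail hxq
  have hchord : (w.append (q.map f.toHom)).IsChordless := by
    refine hw.isChordless.append (hqc.map_embedding f) fun x hx y hy hxy => ?_
    obtain ⟨s, hs, rfl⟩ := List.mem_map.mp (Walk.support_map _ q ▸ hy)
    by_cases hxf : x ∈ Set.range f
    · left
      rcases hw.eq_or_eq_of_mem_range x hx hxf with rfl | rfl
      exacts [Walk.end_mem_support _, Walk.start_mem_support _]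
    · right
      by_cases hsa : s = a
      · exact hsa ▸ w.start_mem_support
      by_cases hsb : s = b
      · exact hsb ▸ w.end_mem_support
      exact absurd (hw.reverse.adj_of_adj hf (by simpa using hx) hxf hxy hsb hsa)
        (hqab s hs (hw.adj_of_adj hf hx hxf hxy hsa hsb))
  exact ⟨by omega, f a, _, hcyc, Walk.isInduced_toSubgraph.mpr hchord, by simp⟩

theorem exists_isEar_of_mem_componentCompl {C : G.ComponentCompl (Set.range f)} {y y' : V}
    (hy : y ∈ C) (hy' : y' ∈ C) (ha : G.Adj (f a) y) (hb : G.Adj y' (f b)) (hab : a ≠ b)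
    (hnadj : ¬ H.Adj a b) : ∃ w : G.Walk (f a) (f b), IsEar f w := by
  classical
  obtain ⟨hyf, hC⟩ := hy
  obtain ⟨hyf', hC'⟩ := hy'
  obtain ⟨γ⟩ := ConnectedComponent.exact (hC.trans hC'.symm)
  let γ' : G.Walk y y' := γ.map (Embedding.induce _).toHom
  let w := Walk.cons ha (γ'.concat hb)
  refine ⟨w.bypass, hab, hnadj, w.bypass_isPath, fun v hv hvf => ?_⟩
  have hvw := w.support_bypass_subset_support hv
  simp only [w, Walk.support_cons, Walk.support_concat, List.mem_cons, List.mem_append,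
    List.mem_nil_iff, or_false] at hvw
  rcases hvw with h | h | h
  · exact .inl h
  · obtain ⟨z, -, rfl⟩ := List.mem_map.mp (Walk.support_map _ γ ▸ h)
    exact absurd hvf z.2
  · exact .inr h

/-- If the vertices of the copy attached to `C` formed a clique, deleting them (at most two, as
`H` is triangle-free) would separate `C` from the rest of the copy. -/
theorem ComponentCompl.exists_not_adj [Fintype V] (hG : G.ThreeConnected) (hH : H.CliqueFree 3)
    (hW : 2 < Nat.card W) (C : G.ComponentCompl (Set.range f)) :
    ∃ a b, a ≠ b ∧ ¬ H.Adj a b ∧ (∃ y ∈ C, G.Adj (f a) y) ∧ ∃ y ∈ C, G.Adj y (f b) := by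
  by_contra hno
  set A : Set W := {p | ∃ y ∈ C, G.Adj y (f p)}
  have hA : H.IsClique A := fun p ⟨y, hy, hp⟩ q ⟨y', hy', hq⟩ hpq =>
    by_contra fun h => hno ⟨p, q, hpq, h, ⟨y, hy, hp.symm⟩, y', hy', hq⟩
  have hcard : (f '' A).ncard ≤ 2 := by
    rw [Set.ncard_image_of_injective _ f.injective]
    exact hA.ncard_le_two hH
  obtain ⟨t, ht⟩ : ∃ t, t ∉ A := by
    by_contra! h
    have := hA.ncard_le_two hH
    rw [Set.eq_univ_of_forall h, Set.ncard_univ] at this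
    omega
  obtain ⟨x, hx⟩ := C.nonempty
  have hxA : x ∉ f '' A := fun h => C.notMem_of_mem hx (Set.image_subset_range _ _ h)
  have htA : f t ∉ f '' A := fun ⟨p, hp, hpt⟩ => ht (f.injective hpt ▸ hp)
  obtain ⟨p⟩ := (hG.2 _ hcard).preconnected ⟨x, hxA⟩ ⟨f t, htA⟩
  obtain ⟨d, hd, hd₁, hd₂⟩ := (p.map (Embedding.induce _).toHom).exists_boundary_dart C hx
    fun h => C.notMem_of_mem h ⟨t, rfl⟩
  obtain ⟨s, hs⟩ : d.snd ∈ Set.range f :=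
    by_contra fun h => hd₂ (ComponentCompl.mem_of_adj _ _ hd₁ h d.adj)
  obtain ⟨z, -, hz⟩ :=
    List.mem_map.mp (Walk.support_map _ p ▸ Walk.dart_snd_mem_support_of_mem_darts _ hd)
  have hzs : (z : V) = f s := hz.trans hs.symm
  exact z.2 (hzs ▸ ⟨s, ⟨d.fst, hd₁, hs ▸ d.adj⟩, rfl⟩)

theorem exists_isEar [Fintype V] (hG : G.ThreeConnected) (hH : H.CliqueFree 3)
    (hW : 2 < Nat.card W) (hf : ¬ Function.Surjective f) :
    ∃ a b, ∃ w : G.Walk (f a) (f b), IsEar f w := by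
  obtain ⟨x, hx⟩ := not_forall.mp hf
  obtain ⟨a, b, hab, hnadj, ⟨y, hy, ha⟩, y', hy', hb⟩ :=
    (G.componentComplMk (K := Set.range f) (by simpa using hx)).exists_not_adj hG hH hW
  exact ⟨a, b, exists_isEar_of_mem_componentCompl hy hy' ha hb hab hnadj⟩

end Ear

end SimpleGraph

instance : DecidableRel petersen.Adj := fun a b =>
  inferInstanceAs (Decidable (Disjoint (a : Finset (Fin 5)) b))

theorem petersen_cliqueFree_three : petersen.CliqueFree 3 := by
  have h : ∀ p q r, petersen.Adj p q → petersen.Adj p r → ¬ petersen.Adj q r := by decide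
  intro s hs
  obtain ⟨p, q, r, hpq, hpr, hqr, rfl⟩ := is3Clique_iff.mp hs
  exact h p q r hpq hpr hqr

theorem petersen_exists_adj_adj_of_not_adj :
    ∀ p q, p ≠ q → ¬ petersen.Adj p q → ∃ c, petersen.Adj p c ∧ petersen.Adj q c := by
  decide

theorem two_lt_nat_card_petersen : 2 < Nat.card {s : Finset (Fin 5) // s.card = 2} := by
  rw [Nat.card_eq_fintype_card]
  decide

set_option synthInstance.maxSize 2000 in
theorem petersen_exists_chordless_path {a b} (hab : a ≠ b) (hnadj : ¬ petersen.Adj a b) {l : ℕ}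
    (hl : l = 3 ∨ l = 4) :
    ∃ q : petersen.Walk b a, q.IsPath ∧ q.IsChordless ∧
      (∀ s ∈ q.support, petersen.Adj a s → ¬ petersen.Adj b s) ∧ q.length = l := by
  rcases hl with rfl | rfl
  · obtain ⟨u, v, h₁, h₂, h₃, hnodup, hcommon, hchord⟩ : ∃ u v, petersen.Adj b u ∧
        petersen.Adj u v ∧ petersen.Adj v a ∧ [b, u, v, a].Nodup ∧
        (∀ s ∈ [b, u, v, a], petersen.Adj a s → ¬ petersen.Adj b s) ∧
        ∀ x ∈ [b, u, v, a], ∀ y ∈ [b, u, v, a], petersen.Adj x y →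
          s(x, y) ∈ [s(b, u), s(u, v), s(v, a)] := by
      revert a b
      decide
    exact ⟨.cons h₁ (.cons h₂ (.cons h₃ .nil)), Walk.isPath_def _ |>.mpr hnodup,
      Walk.isChordless_iff_forall_mem_edges.mpr fun x y hx hy => hchord x hx y hy,
      hcommon, rfl⟩
  · obtain ⟨u, v, t, h₁, h₂, h₃, h₄, hnodup, hcommon, hchord⟩ : ∃ u v t, petersen.Adj b u ∧
        petersen.Adj u v ∧ petersen.Adj v t ∧ petersen.Adj t a ∧ [b, u, v, t, a].Nodup ∧
        (∀ s ∈ [b, u, v, t, a], petersen.Adj a s → ¬ petersen.Adj b s) ∧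
        ∀ x ∈ [b, u, v, t, a], ∀ y ∈ [b, u, v, t, a], petersen.Adj x y →
          s(x, y) ∈ [s(b, u), s(u, v), s(v, t), s(t, a)] := by
      revert a b
      decide
    exact ⟨.cons h₁ (.cons h₂ (.cons h₃ (.cons h₄ .nil))),
      Walk.isPath_def _ |>.mpr hnodup,
      Walk.isChordless_iff_forall_mem_edges.mpr fun x y hx hy => hchord x hx y hy,
      hcommon, rfl⟩

theorem stmt_16_general {V : Type*} [Fintype V] (G : SimpleGraph V) (hG : G.MemGFamily 2)
    (h3c : G.ThreeConnected)
    (hpet : Nonempty (petersen ↪g G)) :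
    Nonempty (G ≃g petersen) := by
  obtain ⟨f⟩ := hpet
  by_contra hiso
  have hsurj : ¬ Function.Surjective f := fun h => hiso ⟨(RelIso.ofSurjective f h).symm⟩
  have hgirth : 4 < G.egirth := by rw [hG.1]; decide
  have hf : ∀ y ∉ Set.range f, ∀ ⦃p q⦄, G.Adj y (f p) → G.Adj y (f q) → p = q :=
    fun _ hy _ _ => f.eq_of_adj_of_adj hgirth petersen_exists_adj_adj_of_not_adj hy
  obtain ⟨a, b, w, hw⟩ := exists_isShortestEar
    (exists_isEar h3c petersen_cliqueFree_three two_lt_nat_card_petersen hsurj)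
  have hk := hw.three_le_length hf
  obtain ⟨l, hl, hodd⟩ : ∃ l, (l = 3 ∨ l = 4) ∧ Odd (w.length + l) := by
    rcases Nat.even_or_odd w.length with h | h
    exacts [⟨3, .inl rfl, h.add_odd (by decide)⟩, ⟨4, .inr rfl, h.add_even (by decide)⟩]
  obtain ⟨q, hq, hqc, hqab, rfl⟩ := petersen_exists_chordless_path hw.ne hw.not_adj hl
  have h7 : 2 * 2 + 3 ≤ w.length + q.length := by
    obtain ⟨m, hm⟩ := hodd
    omega
  exact hG.2 _ hodd h7 (hw.hasHole_append hf hq hqc hqab)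

/-- a 3-connected graph `G ∈ 𝒢₂` whose 3-cutsets are all stable and which
has an induced subgraph isomorphic to the Petersen graph is itself isomorphic to the
Petersen graph. -/
theorem stmt_16 {V : Type*} [Fintype V] (G : SimpleGraph V) (hG : G.MemGFamily 2)
    (h3c : G.ThreeConnected)
    (hstable : ∀ X : Set V, X.ncard = 3 → G.IsCutset X → ∀ a ∈ X, ∀ b ∈ X, ¬ G.Adj a b)
    (hpet : Nonempty (petersen ↪g G)) :
    Nonempty (G ≃g petersen) :=
  stmt_16_general G hG h3c hpet
end
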